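/- arXiv:1609.02824 — 5 statements merged into one kernel-verified Lean document; each statement's English description precedes it below -/
import Mathlib

section
/- Let G = (V,E) be a finite simple graph, let M1, M2 ⊆ V be disjoint, and let (ω1, ω2) ∈ Ω_G(M1) × Ω_G(M2). Let c be the number of connected components of the spanning subgraph with edge set ω1 Δ ω2 that are cycles. Then the number of pairs (ω1', ω2') ∈ Ω_G(M1) × Ω_G(M2) satisfying ω1' ∩ ω2' = ω1 ∩ ω2 and ω1' Δ ω2' = ω1 Δ ω2 is exactly 2^c. -/
open scoped Classical symmDiff
open Finset

/-- `ω` is a dimer cover (perfect matching) of the graph `G` depleted by the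
monomer set `M`. -/
def IsDimerCover {V : Type*} (G : SimpleGraph V) (M : Finset V)
    (ω : Finset (Sym2 V)) : Prop :=
  (∀ e ∈ ω, e ∈ G.edgeSet) ∧
  (∀ v ∈ M, ∀ e ∈ ω, v ∉ e) ∧
  (∀ v : V, v ∉ M → ∃! e, e ∈ ω ∧ v ∈ e)

/-- The degree of a vertex `v` in the spanning subgraph with edge set `S`. -/
noncomputable def degIn {V : Type*} [DecidableEq V] (S : Finset (Sym2 V)) (v : V) : ℕ :=
  (S.filter (fun e => v ∈ e)).card

/-- The spanning subgraph of the overlay `ω₁ Δ ω₂`. -/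
def symmGraph {V : Type*} [DecidableEq V] (ω₁ ω₂ : Finset (Sym2 V)) : SimpleGraph V :=
  SimpleGraph.fromEdgeSet (↑(ω₁ ∆ ω₂) : Set (Sym2 V))

/-- The number of cycle components of the overlay `ω₁ Δ ω₂`: connected components
containing an edge in which every vertex has degree 2. -/
noncomputable def numCycleComponents {V : Type*} [Fintype V] [DecidableEq V]
    (ω₁ ω₂ : Finset (Sym2 V)) : ℕ :=
  Nat.card {c : (symmGraph ω₁ ω₂).ConnectedComponent //
    ∀ v : V, (symmGraph ω₁ ω₂).connectedComponentMk v = c → degIn (ω₁ ∆ ω₂) v = 2}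

namespace DDAux

variable {V : Type*} [Fintype V] [DecidableEq V]
variable {G : SimpleGraph V} {M₁ M₂ : Finset V} {ω₁ ω₂ : Finset (Sym2 V)}

lemma symmGraph_adj {v w : V} :
    (symmGraph ω₁ ω₂).Adj v w ↔ s(v, w) ∈ ω₁ ∆ ω₂ ∧ v ≠ w := by
  simp only [symmGraph, SimpleGraph.fromEdgeSet_adj, Finset.mem_coe]

lemma D_mem_or {e : Sym2 V} (he : e ∈ ω₁ ∆ ω₂) : e ∈ ω₁ ∨ e ∈ ω₂ := by
  rw [Finset.mem_symmDiff] at he; tauto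

lemma I_D_disj {e : Sym2 V} (hi : e ∈ ω₁ ∩ ω₂) : e ∉ ω₁ ∆ ω₂ := by
  rw [Finset.mem_inter] at hi; rw [Finset.mem_symmDiff]; tauto

lemma D_not_diag (h₁ : IsDimerCover G M₁ ω₁) (h₂ : IsDimerCover G M₂ ω₂)
    {e : Sym2 V} (he : e ∈ ω₁ ∆ ω₂) : ¬ e.IsDiag := by
  rcases D_mem_or he with h | h
  · exact G.not_isDiag_of_mem_edgeSet (h₁.1 e h)
  · exact G.not_isDiag_of_mem_edgeSet (h₂.1 e h)

lemma comp_eq_of_mem (h₁ : IsDimerCover G M₁ ω₁) (h₂ : IsDimerCover G M₂ ω₂)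
    {e : Sym2 V} {v w : V} (he : e ∈ ω₁ ∆ ω₂) (hv : v ∈ e) (hw : w ∈ e) :
    (symmGraph ω₁ ω₂).connectedComponentMk v = (symmGraph ω₁ ω₂).connectedComponentMk w := by
  rcases eq_or_ne v w with rfl | hne
  · rfl
  · refine SimpleGraph.ConnectedComponent.sound ?_
    refine (symmGraph_adj.mpr ⟨?_, hne⟩).reachable
    have : e = s(v, w) := (Sym2.mem_and_mem_iff hne).mp ⟨hv, hw⟩
    rwa [← this]

/-- A monomer vertex of `M₁` is incident to exactly one overlay edge, which is an
`ω₂`-edge. -/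
lemma D_filter_M₁ (hdisj : Disjoint M₁ M₂) (h₁ : IsDimerCover G M₁ ω₁)
    (h₂ : IsDimerCover G M₂ ω₂) {v : V} (hv : v ∈ M₁) :
    ∃ e, e ∈ ω₂ ∧ e ∉ ω₁ ∧ v ∈ e ∧ (ω₁ ∆ ω₂).filter (fun e => v ∈ e) = {e} := by
  have hv2 : v ∉ M₂ := fun h => (Finset.disjoint_left.mp hdisj hv) h
  obtain ⟨e, ⟨he2, hve⟩, huniq⟩ := h₂.2.2 v hv2
  have he1 : e ∉ ω₁ := fun h => h₁.2.1 v hv e h hve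
  refine ⟨e, he2, he1, hve, ?_⟩
  ext f
  simp only [Finset.mem_filter, Finset.mem_singleton, Finset.mem_symmDiff]
  constructor
  · rintro ⟨hf, hvf⟩
    rcases hf with ⟨hf1, -⟩ | ⟨hf2, -⟩
    · exact absurd hvf (h₁.2.1 v hv f hf1)
    · exact huniq f ⟨hf2, hvf⟩
  · rintro rfl
    exact ⟨Or.inr ⟨he2, he1⟩, hve⟩

lemma D_filter_M₂ (hdisj : Disjoint M₁ M₂) (h₁ : IsDimerCover G M₁ ω₁)
    (h₂ : IsDimerCover G M₂ ω₂) {v : V} (hv : v ∈ M₂) :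
    ∃ e, e ∈ ω₁ ∧ e ∉ ω₂ ∧ v ∈ e ∧ (ω₁ ∆ ω₂).filter (fun e => v ∈ e) = {e} := by
  have := D_filter_M₁ (M₁ := M₂) (M₂ := M₁) hdisj.symm h₂ h₁ hv
  rwa [symmDiff_comm] at this

/-- A non-monomer vertex is incident to either zero or two overlay edges. -/
lemma D_filter_free (h₁ : IsDimerCover G M₁ ω₁) (h₂ : IsDimerCover G M₂ ω₂)
    {v : V} (hv1 : v ∉ M₁) (hv2 : v ∉ M₂) :
    (∃ g, g ∈ ω₁ ∧ g ∈ ω₂ ∧ v ∈ g ∧ (ω₁ ∆ ω₂).filter (fun e => v ∈ e) = ∅) ∨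
    (∃ e₁ e₂, e₁ ∈ ω₁ ∧ e₁ ∉ ω₂ ∧ e₂ ∈ ω₂ ∧ e₂ ∉ ω₁ ∧ v ∈ e₁ ∧ v ∈ e₂ ∧ e₁ ≠ e₂ ∧
      (ω₁ ∆ ω₂).filter (fun e => v ∈ e) = {e₁, e₂}) := by
  obtain ⟨e₁, ⟨he₁, hve₁⟩, hu₁⟩ := h₁.2.2 v hv1
  obtain ⟨e₂, ⟨he₂, hve₂⟩, hu₂⟩ := h₂.2.2 v hv2
  rcases eq_or_ne e₁ e₂ with rfl | hne
  · left
    refine ⟨e₁, he₁, he₂, hve₁, ?_⟩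
    ext f
    simp only [Finset.mem_filter, Finset.mem_symmDiff, Finset.notMem_empty, iff_false,
      not_and]
    rintro (⟨hf1, hf2⟩ | ⟨hf2, hf1⟩) hvf
    · have : f = e₁ := hu₁ f ⟨hf1, hvf⟩
      exact hf2 (this ▸ he₂)
    · have : f = e₁ := hu₂ f ⟨hf2, hvf⟩
      exact hf1 (this ▸ he₁)
  · right
    have hn₁ : e₁ ∉ ω₂ := fun h => hne (hu₂ e₁ ⟨h, hve₁⟩)
    have hn₂ : e₂ ∉ ω₁ := fun h => hne ((hu₁ e₂ ⟨h, hve₂⟩).symm)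
    refine ⟨e₁, e₂, he₁, hn₁, he₂, hn₂, hve₁, hve₂, hne, ?_⟩
    ext f
    simp only [Finset.mem_filter, Finset.mem_symmDiff, Finset.mem_insert, Finset.mem_singleton]
    constructor
    · rintro ⟨hf, hvf⟩
      rcases hf with ⟨hf1, -⟩ | ⟨hf2, -⟩
      · exact Or.inl (hu₁ f ⟨hf1, hvf⟩)
      · exact Or.inr (hu₂ f ⟨hf2, hvf⟩)
    · rintro (rfl | rfl)
      · exact ⟨Or.inl ⟨he₁, hn₁⟩, hve₁⟩
      · exact ⟨Or.inr ⟨he₂, hn₂⟩, hve₂⟩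

lemma mem_decomp {σ τ : Finset (Sym2 V)} (hI : σ ∩ τ = ω₁ ∩ ω₂) (hD : σ ∆ τ = ω₁ ∆ ω₂)
    {e : Sym2 V} (he : e ∈ σ) : e ∈ ω₁ ∩ ω₂ ∨ e ∈ ω₁ ∆ ω₂ := by
  by_cases h2 : e ∈ τ
  · exact Or.inl (hI ▸ Finset.mem_inter.mpr ⟨he, h2⟩)
  · exact Or.inr (hD ▸ Finset.mem_symmDiff.mpr (Or.inl ⟨he, h2⟩))

/-- The first cover of a valid pair agrees with `ω₁` on all overlay edges at `v`. -/
def Agr (ω₁ ω₂ σ : Finset (Sym2 V)) (v : V) : Prop :=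
  ∀ e ∈ ω₁ ∆ ω₂, v ∈ e → (e ∈ σ ↔ e ∈ ω₁)

section ValidPair

variable {σ₁ σ₂ : Finset (Sym2 V)}
variable (hdisj : Disjoint M₁ M₂)
variable (h₁ : IsDimerCover G M₁ ω₁) (h₂ : IsDimerCover G M₂ ω₂)
variable (hs₁ : IsDimerCover G M₁ σ₁) (hs₂ : IsDimerCover G M₂ σ₂)
variable (hI : σ₁ ∩ σ₂ = ω₁ ∩ ω₂) (hD : σ₁ ∆ σ₂ = ω₁ ∆ ω₂)

include hdisj h₁ h₂ hs₁ hs₂ hI hD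

lemma agr_of_M₁ {v : V} (hv : v ∈ M₁) : Agr ω₁ ω₂ σ₁ v := by
  intro e he hve
  obtain ⟨e', he'2, he'1, hve', hfil⟩ := D_filter_M₁ hdisj h₁ h₂ hv
  have : e = e' := by
    have hm : e ∈ (ω₁ ∆ ω₂).filter (fun e => v ∈ e) := Finset.mem_filter.mpr ⟨he, hve⟩
    rw [hfil, Finset.mem_singleton] at hm; exact hm
  subst this
  exact iff_of_false (fun h => hs₁.2.1 v hv e h hve) he'1

lemma agr_of_M₂ {v : V} (hv : v ∈ M₂) : Agr ω₁ ω₂ σ₁ v := by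
  intro e he hve
  obtain ⟨e', he'1, he'2, hve', hfil⟩ := D_filter_M₂ hdisj h₁ h₂ hv
  have heq : e = e' := by
    have hm : e ∈ (ω₁ ∆ ω₂).filter (fun e => v ∈ e) := Finset.mem_filter.mpr ⟨he, hve⟩
    rw [hfil, Finset.mem_singleton] at hm; exact hm
  subst heq
  have hv1 : v ∉ M₁ := fun h => (Finset.disjoint_left.mp hdisj h) hv
  obtain ⟨f, ⟨hf, hvf⟩, hfu⟩ := hs₁.2.2 v hv1
  have hfd : f ∈ ω₁ ∆ ω₂ := by
    rcases mem_decomp hI hD hf with hI' | hD'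
    · exact absurd hvf (h₂.2.1 v hv f (Finset.mem_inter.mp hI').2)
    · exact hD'
  have : f = e := by
    have hm : f ∈ (ω₁ ∆ ω₂).filter (fun e => v ∈ e) := Finset.mem_filter.mpr ⟨hfd, hvf⟩
    rw [hfil, Finset.mem_singleton] at hm; exact hm
  subst this
  exact iff_of_true hf he'1

lemma agr_or_dis (v : V) :
    Agr ω₁ ω₂ σ₁ v ∨ ∀ e ∈ ω₁ ∆ ω₂, v ∈ e → (e ∈ σ₁ ↔ e ∉ ω₁) := by
  by_cases hv1 : v ∈ M₁
  · exact Or.inl (agr_of_M₁ hdisj h₁ h₂ hs₁ hs₂ hI hD hv1)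
  by_cases hv2 : v ∈ M₂
  · exact Or.inl (agr_of_M₂ hdisj h₁ h₂ hs₁ hs₂ hI hD hv2)
  rcases D_filter_free h₁ h₂ hv1 hv2 with ⟨g, -, -, -, hfil⟩ |
    ⟨e₁, e₂, he₁, hn₁, he₂, hn₂, hve₁, hve₂, hne, hfil⟩
  · left
    intro e he hve
    have hm : e ∈ (ω₁ ∆ ω₂).filter (fun e => v ∈ e) := Finset.mem_filter.mpr ⟨he, hve⟩
    rw [hfil] at hm
    exact absurd hm (Finset.notMem_empty e)
  · obtain ⟨f, ⟨hf, hvf⟩, hfu⟩ := hs₁.2.2 v hv1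
    have hfd : f ∈ ω₁ ∆ ω₂ := by
      rcases mem_decomp hI hD hf with hI' | hD'
      · have h1 : f = e₁ := (h₁.2.2 v hv1).unique ⟨(Finset.mem_inter.mp hI').1, hvf⟩ ⟨he₁, hve₁⟩
        have h2 : f = e₂ := (h₂.2.2 v hv2).unique ⟨(Finset.mem_inter.mp hI').2, hvf⟩ ⟨he₂, hve₂⟩
        exact absurd (h1 ▸ h2) hne
      · exact hD'
    have hf12 : f = e₁ ∨ f = e₂ := by
      have hm : f ∈ (ω₁ ∆ ω₂).filter (fun e => v ∈ e) := Finset.mem_filter.mpr ⟨hfd, hvf⟩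
      rw [hfil] at hm
      simpa using hm
    have hmem12 : ∀ e ∈ ω₁ ∆ ω₂, v ∈ e → (e = e₁ ∨ e = e₂) := by
      intro e he hve
      have hm : e ∈ (ω₁ ∆ ω₂).filter (fun e => v ∈ e) := Finset.mem_filter.mpr ⟨he, hve⟩
      rw [hfil] at hm
      simpa using hm
    rcases hf12 with heq | heq
    · rw [heq] at hf hfu
      left
      intro e he hve
      rcases hmem12 e he hve with heq2 | heq2 <;> subst heq2
      · exact iff_of_true hf he₁
      · exact iff_of_false (fun h => hne ((hfu e ⟨h, hve⟩).symm)) hn₂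
    · rw [heq] at hf hfu
      right
      intro e he hve
      rcases hmem12 e he hve with heq2 | heq2 <;> subst heq2
      · exact iff_of_false (fun h => hne (hfu e ⟨h, hve⟩)) (not_not_intro he₁)
      · exact iff_of_true hf hn₂

lemma agr_adj {u v : V} (h : (symmGraph ω₁ ω₂).Adj u v) (hu : Agr ω₁ ω₂ σ₁ u) :
    Agr ω₁ ω₂ σ₁ v := by
  obtain ⟨hmem, hne⟩ := symmGraph_adj.mp h
  rcases agr_or_dis hdisj h₁ h₂ hs₁ hs₂ hI hD v with h' | h'
  · exact h'
  · exfalso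
    have h1 := hu s(u, v) hmem (Sym2.mem_mk_left u v)
    have h2 := h' s(u, v) hmem (Sym2.mem_mk_right u v)
    rw [Finset.mem_symmDiff] at hmem
    tauto

lemma agr_reachable {u v : V} (h : (symmGraph ω₁ ω₂).Reachable u v)
    (hu : Agr ω₁ ω₂ σ₁ u) : Agr ω₁ ω₂ σ₁ v := by
  obtain ⟨w⟩ := h
  induction w with
  | nil => exact hu
  | cons hadj p ih => exact ih (agr_adj hdisj h₁ h₂ hs₁ hs₂ hI hD hadj hu)

lemma eq_of_not_cycle {e : Sym2 V} (he : e ∈ ω₁ ∆ ω₂) {v : V} (hv : v ∈ e)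
    (hnc : ¬ ∀ w, (symmGraph ω₁ ω₂).connectedComponentMk w =
      (symmGraph ω₁ ω₂).connectedComponentMk v → degIn (ω₁ ∆ ω₂) w = 2) :
    (e ∈ σ₁ ↔ e ∈ ω₁) := by
  push_neg at hnc
  obtain ⟨w, hw, hdw⟩ := hnc
  have hreach : (symmGraph ω₁ ω₂).Reachable w v := SimpleGraph.ConnectedComponent.exact hw
  have hagr : Agr ω₁ ω₂ σ₁ w := by
    by_cases hw1 : w ∈ M₁
    · exact agr_of_M₁ hdisj h₁ h₂ hs₁ hs₂ hI hD hw1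
    by_cases hw2 : w ∈ M₂
    · exact agr_of_M₂ hdisj h₁ h₂ hs₁ hs₂ hI hD hw2
    rcases D_filter_free h₁ h₂ hw1 hw2 with ⟨g, -, -, -, hfil⟩ |
      ⟨e₁, e₂, -, -, -, -, -, -, hne, hfil⟩
    · intro e' he' hwe'
      have hm : e' ∈ (ω₁ ∆ ω₂).filter (fun e => w ∈ e) := Finset.mem_filter.mpr ⟨he', hwe'⟩
      rw [hfil] at hm
      exact absurd hm (Finset.notMem_empty e')
    · exfalso
      apply hdw
      unfold degIn
      rw [hfil]
      rw [Finset.card_insert_of_notMem (by simpa using hne), Finset.card_singleton]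
  exact agr_reachable hdisj h₁ h₂ hs₁ hs₂ hI hD hreach hagr e he hv

lemma consistent {e e' : Sym2 V} (he : e ∈ ω₁ ∆ ω₂) (he' : e' ∈ ω₁ ∆ ω₂)
    {v v' : V} (hv : v ∈ e) (hv' : v' ∈ e')
    (hc : (symmGraph ω₁ ω₂).connectedComponentMk v =
      (symmGraph ω₁ ω₂).connectedComponentMk v') :
    ((e ∈ σ₁ ↔ e ∈ ω₁) ↔ (e' ∈ σ₁ ↔ e' ∈ ω₁)) := by
  by_cases ha : Agr ω₁ ω₂ σ₁ v
  · have ha' : Agr ω₁ ω₂ σ₁ v' :=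
      agr_reachable hdisj h₁ h₂ hs₁ hs₂ hI hD (SimpleGraph.ConnectedComponent.exact hc) ha
    exact iff_of_true (ha e he hv) (ha' e' he' hv')
  · have ha'' : ¬ Agr ω₁ ω₂ σ₁ v' := fun h => ha
      (agr_reachable hdisj h₁ h₂ hs₁ hs₂ hI hD
        (SimpleGraph.ConnectedComponent.exact hc.symm) h)
    have hd := (agr_or_dis hdisj h₁ h₂ hs₁ hs₂ hI hD v).resolve_left ha
    have hd' := (agr_or_dis hdisj h₁ h₂ hs₁ hs₂ hI hD v').resolve_left ha''
    have h1 := hd e he hv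
    have h2 := hd' e' he' hv'
    tauto

end ValidPair

lemma exists_repEdge (hdisj : Disjoint M₁ M₂) (h₁ : IsDimerCover G M₁ ω₁)
    (h₂ : IsDimerCover G M₂ ω₂) {c : (symmGraph ω₁ ω₂).ConnectedComponent}
    (hc : ∀ v, (symmGraph ω₁ ω₂).connectedComponentMk v = c → degIn (ω₁ ∆ ω₂) v = 2) :
    ∃ e, e ∈ ω₁ ∧ e ∉ ω₂ ∧ ∃ v, v ∈ e ∧ (symmGraph ω₁ ω₂).connectedComponentMk v = c := by
  have hv : (symmGraph ω₁ ω₂).connectedComponentMk (Quot.out c) = c := Quot.out_eq c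
  set v := Quot.out c with hvdef
  have hdeg : degIn (ω₁ ∆ ω₂) v = 2 := hc v hv
  have hv1 : v ∉ M₁ := by
    intro h
    obtain ⟨e, -, -, -, hfil⟩ := D_filter_M₁ hdisj h₁ h₂ h
    unfold degIn at hdeg
    rw [hfil] at hdeg
    simp at hdeg
  have hv2 : v ∉ M₂ := by
    intro h
    obtain ⟨e, -, -, -, hfil⟩ := D_filter_M₂ hdisj h₁ h₂ h
    unfold degIn at hdeg
    rw [hfil] at hdeg
    simp at hdeg
  rcases D_filter_free h₁ h₂ hv1 hv2 with ⟨g, -, -, -, hfil⟩ |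
    ⟨e₁, e₂, he₁, hn₁, -, -, hve₁, -, -, -⟩
  · unfold degIn at hdeg
    rw [hfil] at hdeg
    simp at hdeg
  · exact ⟨e₁, he₁, hn₁, v, hve₁, hv⟩

/-- The bit selecting which of the two matchings is used on a given component. -/
noncomputable def bitc (ω₁ ω₂ : Finset (Sym2 V))
    (f : {c : (symmGraph ω₁ ω₂).ConnectedComponent //
      ∀ v : V, (symmGraph ω₁ ω₂).connectedComponentMk v = c → degIn (ω₁ ∆ ω₂) v = 2} → Bool)
    (c : (symmGraph ω₁ ω₂).ConnectedComponent) : Bool :=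
  if h : ∀ v : V, (symmGraph ω₁ ω₂).connectedComponentMk v = c → degIn (ω₁ ∆ ω₂) v = 2 then
    f ⟨c, h⟩
  else true

noncomputable def selSet (ω₁ ω₂ : Finset (Sym2 V))
    (f : {c : (symmGraph ω₁ ω₂).ConnectedComponent //
      ∀ v : V, (symmGraph ω₁ ω₂).connectedComponentMk v = c → degIn (ω₁ ∆ ω₂) v = 2} → Bool) :
    Finset (Sym2 V) :=
  (ω₁ ∆ ω₂).filter (fun e =>
    (e ∈ ω₁ ↔ bitc ω₁ ω₂ f ((symmGraph ω₁ ω₂).connectedComponentMk e.out.1) = true))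

lemma mem_selSet (h₁ : IsDimerCover G M₁ ω₁) (h₂ : IsDimerCover G M₂ ω₂)
    {f : {c : (symmGraph ω₁ ω₂).ConnectedComponent //
      ∀ v : V, (symmGraph ω₁ ω₂).connectedComponentMk v = c → degIn (ω₁ ∆ ω₂) v = 2} → Bool}
    {e : Sym2 V} (he : e ∈ ω₁ ∆ ω₂) {v : V} (hv : v ∈ e) :
    (e ∈ selSet ω₁ ω₂ f ↔
      (e ∈ ω₁ ↔ bitc ω₁ ω₂ f ((symmGraph ω₁ ω₂).connectedComponentMk v) = true)) := by
  have hcomp : (symmGraph ω₁ ω₂).connectedComponentMk e.out.1 =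
      (symmGraph ω₁ ω₂).connectedComponentMk v :=
    comp_eq_of_mem h₁ h₂ he (Sym2.out_fst_mem e) hv
  unfold selSet
  rw [Finset.mem_filter, hcomp]
  simp [he]


section MoreAux

variable {σ₁ σ₂ : Finset (Sym2 V)}

lemma not_M₁_of_deg_two (hdisj : Disjoint M₁ M₂) (h₁ : IsDimerCover G M₁ ω₁)
    (h₂ : IsDimerCover G M₂ ω₂) {v : V} (hdeg : degIn (ω₁ ∆ ω₂) v = 2) : v ∉ M₁ := by
  intro h
  obtain ⟨e, -, -, -, hfil⟩ := D_filter_M₁ hdisj h₁ h₂ h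
  unfold degIn at hdeg
  rw [hfil] at hdeg
  simp at hdeg

lemma not_M₂_of_deg_two (hdisj : Disjoint M₁ M₂) (h₁ : IsDimerCover G M₁ ω₁)
    (h₂ : IsDimerCover G M₂ ω₂) {v : V} (hdeg : degIn (ω₁ ∆ ω₂) v = 2) : v ∉ M₂ := by
  intro h
  obtain ⟨e, -, -, -, hfil⟩ := D_filter_M₂ hdisj h₁ h₂ h
  unfold degIn at hdeg
  rw [hfil] at hdeg
  simp at hdeg

lemma companion (hdisj : Disjoint M₁ M₂) (h₁ : IsDimerCover G M₁ ω₁)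
    (h₂ : IsDimerCover G M₂ ω₂) {v : V} (hdeg : degIn (ω₁ ∆ ω₂) v = 2) :
    ∃ e, e ∈ ω₁ ∧ e ∉ ω₂ ∧ v ∈ e := by
  have hv1 := not_M₁_of_deg_two hdisj h₁ h₂ hdeg
  have hv2 := not_M₂_of_deg_two hdisj h₁ h₂ hdeg
  rcases D_filter_free h₁ h₂ hv1 hv2 with ⟨g, -, -, -, hfil⟩ |
    ⟨e₁, e₂, he₁, hn₁, -, -, hve₁, -, -, -⟩
  · exfalso
    unfold degIn at hdeg
    rw [hfil] at hdeg
    simp at hdeg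
  · exact ⟨e₁, he₁, hn₁, hve₁⟩

lemma selSet_subset_D {f : {c : (symmGraph ω₁ ω₂).ConnectedComponent //
      ∀ v : V, (symmGraph ω₁ ω₂).connectedComponentMk v = c → degIn (ω₁ ∆ ω₂) v = 2} → Bool} :
    selSet ω₁ ω₂ f ⊆ ω₁ ∆ ω₂ :=
  Finset.filter_subset _ _

section ValidPair2

variable (hdisj : Disjoint M₁ M₂)
variable (h₁ : IsDimerCover G M₁ ω₁) (h₂ : IsDimerCover G M₂ ω₂)
variable (hs₁ : IsDimerCover G M₁ σ₁) (hs₂ : IsDimerCover G M₂ σ₂)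
variable (hI : σ₁ ∩ σ₂ = ω₁ ∩ ω₂) (hD : σ₁ ∆ σ₂ = ω₁ ∆ ω₂)

include hdisj h₁ h₂ hs₁ hs₂ hI hD

lemma sel_eq_sigma (f : {c : (symmGraph ω₁ ω₂).ConnectedComponent //
      ∀ v : V, (symmGraph ω₁ ω₂).connectedComponentMk v = c → degIn (ω₁ ∆ ω₂) v = 2} → Bool)
    (hf : ∀ (c : (symmGraph ω₁ ω₂).ConnectedComponent)
      (hc : ∀ v : V, (symmGraph ω₁ ω₂).connectedComponentMk v = c → degIn (ω₁ ∆ ω₂) v = 2)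
      (e' : Sym2 V), e' ∈ ω₁ → e' ∉ ω₂ → ∀ v : V, v ∈ e' →
      (symmGraph ω₁ ω₂).connectedComponentMk v = c → (f ⟨c, hc⟩ = true ↔ e' ∈ σ₁)) :
    ω₁ ∩ ω₂ ∪ selSet ω₁ ω₂ f = σ₁ := by
  ext e
  simp only [Finset.mem_union]
  constructor
  · rintro (hI' | hsel)
    · rw [← hI] at hI'
      exact (Finset.mem_inter.mp hI').1
    · have hD' : e ∈ ω₁ ∆ ω₂ := selSet_subset_D hsel
      have hcond := (mem_selSet h₁ h₂ hD' (Sym2.out_fst_mem e)).mp hsel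
      by_cases hcyc : ∀ w, (symmGraph ω₁ ω₂).connectedComponentMk w =
          (symmGraph ω₁ ω₂).connectedComponentMk e.out.1 → degIn (ω₁ ∆ ω₂) w = 2
      · simp only [bitc, dif_pos hcyc] at hcond
        rcases Finset.mem_symmDiff.mp hD' with ⟨he1, he2⟩ | ⟨he2, he1⟩
        · exact (hf _ hcyc e he1 he2 e.out.1 (Sym2.out_fst_mem e) rfl).mp (hcond.mp he1)
        · obtain ⟨e₁, he₁, hn₁, hve₁⟩ :=
            companion hdisj h₁ h₂ (hcyc e.out.1 rfl)
          have hD₁ : e₁ ∈ ω₁ ∆ ω₂ := Finset.mem_symmDiff.mpr (Or.inl ⟨he₁, hn₁⟩)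
          have hfe := hf _ hcyc e₁ he₁ hn₁ e.out.1 hve₁ rfl
          have hcons := consistent hdisj h₁ h₂ hs₁ hs₂ hI hD hD' hD₁
            (Sym2.out_fst_mem e) hve₁ rfl
          have hb : ¬ (f ⟨_, hcyc⟩ = true) := fun hb => he1 (hcond.mpr hb)
          have he₁σ : e₁ ∉ σ₁ := fun h => hb (hfe.mpr h)
          tauto
      · simp only [bitc, dif_neg hcyc] at hcond
        exact (eq_of_not_cycle hdisj h₁ h₂ hs₁ hs₂ hI hD hD' (Sym2.out_fst_mem e)
          hcyc).mpr (hcond.mpr trivial)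
  · intro he
    rcases mem_decomp hI hD he with hI' | hD'
    · exact Or.inl hI'
    · right
      rw [mem_selSet h₁ h₂ hD' (Sym2.out_fst_mem e)]
      by_cases hcyc : ∀ w, (symmGraph ω₁ ω₂).connectedComponentMk w =
          (symmGraph ω₁ ω₂).connectedComponentMk e.out.1 → degIn (ω₁ ∆ ω₂) w = 2
      · simp only [bitc, dif_pos hcyc]
        rcases Finset.mem_symmDiff.mp hD' with ⟨he1, he2⟩ | ⟨he2, he1⟩
        · exact iff_of_true he1 ((hf _ hcyc e he1 he2 e.out.1 (Sym2.out_fst_mem e) rfl).mpr he)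
        · obtain ⟨e₁, he₁, hn₁, hve₁⟩ :=
            companion hdisj h₁ h₂ (hcyc e.out.1 rfl)
          have hD₁ : e₁ ∈ ω₁ ∆ ω₂ := Finset.mem_symmDiff.mpr (Or.inl ⟨he₁, hn₁⟩)
          have hfe := hf _ hcyc e₁ he₁ hn₁ e.out.1 hve₁ rfl
          have hcons := consistent hdisj h₁ h₂ hs₁ hs₂ hI hD hD' hD₁
            (Sym2.out_fst_mem e) hve₁ rfl
          tauto
      · simp only [bitc, dif_neg hcyc]
        exact iff_of_true ((eq_of_not_cycle hdisj h₁ h₂ hs₁ hs₂ hI hD hD'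
          (Sym2.out_fst_mem e) hcyc).mp he) trivial

omit hdisj h₁ h₂ hs₁ hs₂ in
lemma sigma₂_eq {f : {c : (symmGraph ω₁ ω₂).ConnectedComponent //
      ∀ v : V, (symmGraph ω₁ ω₂).connectedComponentMk v = c → degIn (ω₁ ∆ ω₂) v = 2} → Bool}
    (h1 : ω₁ ∩ ω₂ ∪ selSet ω₁ ω₂ f = σ₁) :
    ω₁ ∩ ω₂ ∪ ((ω₁ ∆ ω₂) \ selSet ω₁ ω₂ f) = σ₂ := by
  ext e
  constructor
  · intro he
    rcases Finset.mem_union.mp he with hI' | hDs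
    · rw [← hI] at hI'
      exact (Finset.mem_inter.mp hI').2
    · obtain ⟨hD', hns⟩ := Finset.mem_sdiff.mp hDs
      have heσ₁ : e ∉ σ₁ := by
        rw [← h1]
        intro h
        rcases Finset.mem_union.mp h with hI' | hs
        · exact I_D_disj hI' hD'
        · exact hns hs
      rw [← hD, Finset.mem_symmDiff] at hD'
      tauto
  · intro he
    have hIc : σ₂ ∩ σ₁ = ω₁ ∩ ω₂ := by rw [Finset.inter_comm]; exact hI
    have hDc : σ₂ ∆ σ₁ = ω₁ ∆ ω₂ := by rw [symmDiff_comm]; exact hD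
    rcases mem_decomp hIc hDc he with hI' | hD'
    · exact Finset.mem_union_left _ hI'
    · refine Finset.mem_union_right _ (Finset.mem_sdiff.mpr ⟨hD', ?_⟩)
      intro hs
      have he1 : e ∈ σ₁ := by
        rw [← h1]
        exact Finset.mem_union_right _ hs
      have : e ∈ ω₁ ∩ ω₂ := hI ▸ Finset.mem_inter.mpr ⟨he1, he⟩
      exact I_D_disj this hD'

end ValidPair2

lemma psi_cover₁ (hdisj : Disjoint M₁ M₂) (h₁ : IsDimerCover G M₁ ω₁)
    (h₂ : IsDimerCover G M₂ ω₂)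
    (f : {c : (symmGraph ω₁ ω₂).ConnectedComponent //
      ∀ v : V, (symmGraph ω₁ ω₂).connectedComponentMk v = c → degIn (ω₁ ∆ ω₂) v = 2} → Bool) :
    IsDimerCover G M₁ (ω₁ ∩ ω₂ ∪ selSet ω₁ ω₂ f) := by
  refine ⟨?_, ?_, ?_⟩
  · intro e he
    rcases Finset.mem_union.mp he with h | h
    · exact h₁.1 e (Finset.mem_inter.mp h).1
    · rcases D_mem_or (selSet_subset_D h) with h' | h'
      · exact h₁.1 e h'
      · exact h₂.1 e h'
  · intro v hv e he hve
    rcases Finset.mem_union.mp he with h | h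
    · exact h₁.2.1 v hv e (Finset.mem_inter.mp h).1 hve
    · have heD : e ∈ ω₁ ∆ ω₂ := selSet_subset_D h
      obtain ⟨e', he'2, he'1, hve', hfil⟩ := D_filter_M₁ hdisj h₁ h₂ hv
      have heq : e = e' := by
        have hm : e ∈ (ω₁ ∆ ω₂).filter (fun e => v ∈ e) := Finset.mem_filter.mpr ⟨heD, hve⟩
        rw [hfil, Finset.mem_singleton] at hm
        exact hm
      subst heq
      have hnc : ¬ ∀ w, (symmGraph ω₁ ω₂).connectedComponentMk w =
          (symmGraph ω₁ ω₂).connectedComponentMk v → degIn (ω₁ ∆ ω₂) w = 2 := by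
        intro hcyc
        have := hcyc v rfl
        unfold degIn at this
        rw [hfil] at this
        simp at this
      have hsel := (mem_selSet h₁ h₂ heD hve).mp h
      simp only [bitc, dif_neg hnc] at hsel
      exact he'1 (hsel.mpr trivial)
  · intro v hv
    by_cases hv2 : v ∈ M₂
    · obtain ⟨e, he1, he2, hve, hfil⟩ := D_filter_M₂ hdisj h₁ h₂ hv2
      have heD : e ∈ ω₁ ∆ ω₂ := Finset.mem_symmDiff.mpr (Or.inl ⟨he1, he2⟩)
      have hnc : ¬ ∀ w, (symmGraph ω₁ ω₂).connectedComponentMk w =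
          (symmGraph ω₁ ω₂).connectedComponentMk v → degIn (ω₁ ∆ ω₂) w = 2 := by
        intro hcyc
        have := hcyc v rfl
        unfold degIn at this
        rw [hfil] at this
        simp at this
      have hsel : e ∈ selSet ω₁ ω₂ f := by
        rw [mem_selSet h₁ h₂ heD hve]
        simp only [bitc, dif_neg hnc]
        exact iff_of_true he1 trivial
      refine ⟨e, ⟨Finset.mem_union_right _ hsel, hve⟩, ?_⟩
      rintro y ⟨hy, hvy⟩
      rcases Finset.mem_union.mp hy with h | h
      · exact absurd hvy (h₂.2.1 v hv2 y (Finset.mem_inter.mp h).2)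
      · have hm : y ∈ (ω₁ ∆ ω₂).filter (fun e => v ∈ e) :=
          Finset.mem_filter.mpr ⟨selSet_subset_D h, hvy⟩
        rw [hfil, Finset.mem_singleton] at hm
        exact hm
    · rcases D_filter_free h₁ h₂ hv hv2 with ⟨g, hg1, hg2, hvg, hfil⟩ |
        ⟨e₁, e₂, he₁, hn₁, he₂, hn₂, hve₁, hve₂, hne, hfil⟩
      · refine ⟨g, ⟨Finset.mem_union_left _ (Finset.mem_inter.mpr ⟨hg1, hg2⟩), hvg⟩, ?_⟩
        rintro y ⟨hy, hvy⟩
        rcases Finset.mem_union.mp hy with h | h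
        · exact (h₁.2.2 v hv).unique ⟨(Finset.mem_inter.mp h).1, hvy⟩ ⟨hg1, hvg⟩
        · have hm : y ∈ (ω₁ ∆ ω₂).filter (fun e => v ∈ e) :=
            Finset.mem_filter.mpr ⟨selSet_subset_D h, hvy⟩
          rw [hfil] at hm
          exact absurd hm (Finset.notMem_empty y)
      · have hD₁ : e₁ ∈ ω₁ ∆ ω₂ := Finset.mem_symmDiff.mpr (Or.inl ⟨he₁, hn₁⟩)
        have hD₂ : e₂ ∈ ω₁ ∆ ω₂ := Finset.mem_symmDiff.mpr (Or.inr ⟨he₂, hn₂⟩)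
        have hb₁ : e₁ ∈ selSet ω₁ ω₂ f ↔
            bitc ω₁ ω₂ f ((symmGraph ω₁ ω₂).connectedComponentMk v) = true := by
          rw [mem_selSet h₁ h₂ hD₁ hve₁]
          exact ⟨fun h => h.mp he₁, fun h => iff_of_true he₁ h⟩
        have hb₂ : e₂ ∈ selSet ω₁ ω₂ f ↔
            ¬ (bitc ω₁ ω₂ f ((symmGraph ω₁ ω₂).connectedComponentMk v) = true) := by
          rw [mem_selSet h₁ h₂ hD₂ hve₂]
          constructor
          · intro h hb
            exact hn₂ (h.mpr hb)
          · intro h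
            exact iff_of_false hn₂ h
        have hIe : ∀ y, y ∈ ω₁ ∩ ω₂ → v ∈ y → False := by
          intro y hy hvy
          have hy1 : y = e₁ := (h₁.2.2 v hv).unique ⟨(Finset.mem_inter.mp hy).1, hvy⟩ ⟨he₁, hve₁⟩
          exact hn₁ (hy1 ▸ (Finset.mem_inter.mp hy).2)
        have hmem12 : ∀ y ∈ ω₁ ∆ ω₂, v ∈ y → (y = e₁ ∨ y = e₂) := by
          intro y hy hvy
          have hm : y ∈ (ω₁ ∆ ω₂).filter (fun e => v ∈ e) := Finset.mem_filter.mpr ⟨hy, hvy⟩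
          rw [hfil] at hm
          simpa using hm
        by_cases hbv : bitc ω₁ ω₂ f ((symmGraph ω₁ ω₂).connectedComponentMk v) = true
        · refine ⟨e₁, ⟨Finset.mem_union_right _ (hb₁.mpr hbv), hve₁⟩, ?_⟩
          rintro y ⟨hy, hvy⟩
          rcases Finset.mem_union.mp hy with h | h
          · exact (hIe y h hvy).elim
          · rcases hmem12 y (selSet_subset_D h) hvy with heq | heq
            · exact heq
            · subst heq
              exact ((hb₂.mp h) hbv).elim
        · refine ⟨e₂, ⟨Finset.mem_union_right _ (hb₂.mpr hbv), hve₂⟩, ?_⟩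
          rintro y ⟨hy, hvy⟩
          rcases Finset.mem_union.mp hy with h | h
          · exact (hIe y h hvy).elim
          · rcases hmem12 y (selSet_subset_D h) hvy with heq | heq
            · subst heq
              exact (hbv (hb₁.mp h)).elim
            · exact heq

lemma psi_cover₂ (hdisj : Disjoint M₁ M₂) (h₁ : IsDimerCover G M₁ ω₁)
    (h₂ : IsDimerCover G M₂ ω₂)
    (f : {c : (symmGraph ω₁ ω₂).ConnectedComponent //
      ∀ v : V, (symmGraph ω₁ ω₂).connectedComponentMk v = c → degIn (ω₁ ∆ ω₂) v = 2} → Bool) :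
    IsDimerCover G M₂ (ω₁ ∩ ω₂ ∪ ((ω₁ ∆ ω₂) \ selSet ω₁ ω₂ f)) := by
  refine ⟨?_, ?_, ?_⟩
  · intro e he
    rcases Finset.mem_union.mp he with h | h
    · exact h₂.1 e (Finset.mem_inter.mp h).2
    · rcases D_mem_or (Finset.mem_sdiff.mp h).1 with h' | h'
      · exact h₁.1 e h'
      · exact h₂.1 e h'
  · intro v hv e he hve
    rcases Finset.mem_union.mp he with h | h
    · exact h₂.2.1 v hv e (Finset.mem_inter.mp h).2 hve
    · obtain ⟨heD, hens⟩ := Finset.mem_sdiff.mp h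
      obtain ⟨e', he'1, he'2, hve', hfil⟩ := D_filter_M₂ hdisj h₁ h₂ hv
      have heq : e = e' := by
        have hm : e ∈ (ω₁ ∆ ω₂).filter (fun e => v ∈ e) := Finset.mem_filter.mpr ⟨heD, hve⟩
        rw [hfil, Finset.mem_singleton] at hm
        exact hm
      subst heq
      have hnc : ¬ ∀ w, (symmGraph ω₁ ω₂).connectedComponentMk w =
          (symmGraph ω₁ ω₂).connectedComponentMk v → degIn (ω₁ ∆ ω₂) w = 2 := by
        intro hcyc
        have := hcyc v rfl
        unfold degIn at this
        rw [hfil] at this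
        simp at this
      apply hens
      rw [mem_selSet h₁ h₂ heD hve]
      simp only [bitc, dif_neg hnc]
      exact iff_of_true he'1 trivial
  · intro v hv
    by_cases hv1 : v ∈ M₁
    · obtain ⟨e, he2, he1, hve, hfil⟩ := D_filter_M₁ hdisj h₁ h₂ hv1
      have heD : e ∈ ω₁ ∆ ω₂ := Finset.mem_symmDiff.mpr (Or.inr ⟨he2, he1⟩)
      have hnc : ¬ ∀ w, (symmGraph ω₁ ω₂).connectedComponentMk w =
          (symmGraph ω₁ ω₂).connectedComponentMk v → degIn (ω₁ ∆ ω₂) w = 2 := by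
        intro hcyc
        have := hcyc v rfl
        unfold degIn at this
        rw [hfil] at this
        simp at this
      have hns : e ∉ selSet ω₁ ω₂ f := by
        rw [mem_selSet h₁ h₂ heD hve]
        simp only [bitc, dif_neg hnc]
        exact fun hcon => he1 (hcon.mpr trivial)
      refine ⟨e, ⟨Finset.mem_union_right _ (Finset.mem_sdiff.mpr ⟨heD, hns⟩), hve⟩, ?_⟩
      rintro y ⟨hy, hvy⟩
      rcases Finset.mem_union.mp hy with h | h
      · exact absurd hvy (h₁.2.1 v hv1 y (Finset.mem_inter.mp h).1)
      · have hm : y ∈ (ω₁ ∆ ω₂).filter (fun e => v ∈ e) :=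
          Finset.mem_filter.mpr ⟨(Finset.mem_sdiff.mp h).1, hvy⟩
        rw [hfil, Finset.mem_singleton] at hm
        exact hm
    · rcases D_filter_free h₁ h₂ hv1 hv with ⟨g, hg1, hg2, hvg, hfil⟩ |
        ⟨e₁, e₂, he₁, hn₁, he₂, hn₂, hve₁, hve₂, hne, hfil⟩
      · refine ⟨g, ⟨Finset.mem_union_left _ (Finset.mem_inter.mpr ⟨hg1, hg2⟩), hvg⟩, ?_⟩
        rintro y ⟨hy, hvy⟩
        rcases Finset.mem_union.mp hy with h | h
        · exact (h₂.2.2 v hv).unique ⟨(Finset.mem_inter.mp h).2, hvy⟩ ⟨hg2, hvg⟩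
        · have hm : y ∈ (ω₁ ∆ ω₂).filter (fun e => v ∈ e) :=
            Finset.mem_filter.mpr ⟨(Finset.mem_sdiff.mp h).1, hvy⟩
          rw [hfil] at hm
          exact absurd hm (Finset.notMem_empty y)
      · have hD₁ : e₁ ∈ ω₁ ∆ ω₂ := Finset.mem_symmDiff.mpr (Or.inl ⟨he₁, hn₁⟩)
        have hD₂ : e₂ ∈ ω₁ ∆ ω₂ := Finset.mem_symmDiff.mpr (Or.inr ⟨he₂, hn₂⟩)
        have hb₁ : e₁ ∈ selSet ω₁ ω₂ f ↔
            bitc ω₁ ω₂ f ((symmGraph ω₁ ω₂).connectedComponentMk v) = true := by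
          rw [mem_selSet h₁ h₂ hD₁ hve₁]
          exact ⟨fun h => h.mp he₁, fun h => iff_of_true he₁ h⟩
        have hb₂ : e₂ ∈ selSet ω₁ ω₂ f ↔
            ¬ (bitc ω₁ ω₂ f ((symmGraph ω₁ ω₂).connectedComponentMk v) = true) := by
          rw [mem_selSet h₁ h₂ hD₂ hve₂]
          constructor
          · intro h hb
            exact hn₂ (h.mpr hb)
          · intro h
            exact iff_of_false hn₂ h
        have hIe : ∀ y, y ∈ ω₁ ∩ ω₂ → v ∈ y → False := by
          intro y hy hvy
          have hy1 : y = e₁ := (h₁.2.2 v hv1).unique ⟨(Finset.mem_inter.mp hy).1, hvy⟩ ⟨he₁, hve₁⟩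
          exact hn₁ (hy1 ▸ (Finset.mem_inter.mp hy).2)
        have hmem12 : ∀ y ∈ ω₁ ∆ ω₂, v ∈ y → (y = e₁ ∨ y = e₂) := by
          intro y hy hvy
          have hm : y ∈ (ω₁ ∆ ω₂).filter (fun e => v ∈ e) := Finset.mem_filter.mpr ⟨hy, hvy⟩
          rw [hfil] at hm
          simpa using hm
        by_cases hbv : bitc ω₁ ω₂ f ((symmGraph ω₁ ω₂).connectedComponentMk v) = true
        · refine ⟨e₂, ⟨Finset.mem_union_right _
            (Finset.mem_sdiff.mpr ⟨hD₂, fun hs => (hb₂.mp hs) hbv⟩), hve₂⟩, ?_⟩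
          rintro y ⟨hy, hvy⟩
          rcases Finset.mem_union.mp hy with h | h
          · exact (hIe y h hvy).elim
          · obtain ⟨hyD, hyns⟩ := Finset.mem_sdiff.mp h
            rcases hmem12 y hyD hvy with heq | heq
            · subst heq
              exact (hyns (hb₁.mpr hbv)).elim
            · exact heq
        · refine ⟨e₁, ⟨Finset.mem_union_right _
            (Finset.mem_sdiff.mpr ⟨hD₁, fun hs => hbv (hb₁.mp hs)⟩), hve₁⟩, ?_⟩
          rintro y ⟨hy, hvy⟩
          rcases Finset.mem_union.mp hy with h | h
          · exact (hIe y h hvy).elim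
          · obtain ⟨hyD, hyns⟩ := Finset.mem_sdiff.mp h
            rcases hmem12 y hyD hvy with heq | heq
            · exact heq
            · subst heq
              exact (hyns (hb₂.mpr hbv)).elim

lemma psi_inter (f : {c : (symmGraph ω₁ ω₂).ConnectedComponent //
      ∀ v : V, (symmGraph ω₁ ω₂).connectedComponentMk v = c → degIn (ω₁ ∆ ω₂) v = 2} → Bool) :
    (ω₁ ∩ ω₂ ∪ selSet ω₁ ω₂ f) ∩ (ω₁ ∩ ω₂ ∪ ((ω₁ ∆ ω₂) \ selSet ω₁ ω₂ f)) = ω₁ ∩ ω₂ := by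
  ext e
  have hsub : e ∈ selSet ω₁ ω₂ f → e ∈ ω₁ ∆ ω₂ := fun h => selSet_subset_D h
  have hid : e ∈ ω₁ ∩ ω₂ → e ∉ ω₁ ∆ ω₂ := I_D_disj
  simp only [Finset.mem_inter, Finset.mem_union, Finset.mem_sdiff]
  constructor
  · rintro ⟨h1 | h1, h2 | h2⟩ <;> tauto
  · intro h
    have := hid (Finset.mem_inter.mpr h)
    tauto

lemma psi_sd (f : {c : (symmGraph ω₁ ω₂).ConnectedComponent //
      ∀ v : V, (symmGraph ω₁ ω₂).connectedComponentMk v = c → degIn (ω₁ ∆ ω₂) v = 2} → Bool) :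
    (ω₁ ∩ ω₂ ∪ selSet ω₁ ω₂ f) ∆ (ω₁ ∩ ω₂ ∪ ((ω₁ ∆ ω₂) \ selSet ω₁ ω₂ f)) = ω₁ ∆ ω₂ := by
  ext e
  have hsub : e ∈ selSet ω₁ ω₂ f → e ∈ ω₁ ∆ ω₂ := fun h => selSet_subset_D h
  have hid : e ∈ ω₁ ∩ ω₂ → e ∉ ω₁ ∆ ω₂ := I_D_disj
  rw [Finset.mem_symmDiff]
  simp only [Finset.mem_union, Finset.mem_sdiff, not_or, not_and, not_not]
  constructor
  · rintro (⟨h1 | h1, h2⟩ | ⟨h1 | h1, h2⟩) <;> tauto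
  · intro h
    by_cases hI' : e ∈ ω₁ ∩ ω₂
    · exact absurd h (hid hI')
    · by_cases hs : e ∈ selSet ω₁ ω₂ f <;> tauto

end MoreAux

end DDAux

/-- The number of pairs of depleted dimer covers sharing with `(ω₁, ω₂)` both the
intersection and the symmetric difference of the covers is `2^c`, where `c` is the
number of cycle components of `ω₁ Δ ω₂`. -/
theorem double_dimer_equivalence_class_count {V : Type*} [Fintype V] [DecidableEq V]
    (G : SimpleGraph V) (M₁ M₂ : Finset V) (ω₁ ω₂ : Finset (Sym2 V))
    (hdisj : Disjoint M₁ M₂)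
    (h₁ : IsDimerCover G M₁ ω₁) (h₂ : IsDimerCover G M₂ ω₂) :
    Nat.card {p : Finset (Sym2 V) × Finset (Sym2 V) //
        IsDimerCover G M₁ p.1 ∧ IsDimerCover G M₂ p.2 ∧
        p.1 ∩ p.2 = ω₁ ∩ ω₂ ∧ p.1 ∆ p.2 = ω₁ ∆ ω₂} =
      2 ^ numCycleComponents ω₁ ω₂ := by
  classical
  have hrep : ∀ c : {c : (symmGraph ω₁ ω₂).ConnectedComponent //
      ∀ v : V, (symmGraph ω₁ ω₂).connectedComponentMk v = c → degIn (ω₁ ∆ ω₂) v = 2},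
      ∃ e, e ∈ ω₁ ∧ e ∉ ω₂ ∧ ∃ v, v ∈ e ∧ (symmGraph ω₁ ω₂).connectedComponentMk v = c.1 :=
    fun c => DDAux.exists_repEdge hdisj h₁ h₂ c.2
  choose rep hrep1 hrep2 vtx hvtx1 hvtx2 using hrep
  have hrepD : ∀ c, rep c ∈ ω₁ ∆ ω₂ :=
    fun c => Finset.mem_symmDiff.mpr (Or.inl ⟨hrep1 c, hrep2 c⟩)
  have equiv : {p : Finset (Sym2 V) × Finset (Sym2 V) //
      IsDimerCover G M₁ p.1 ∧ IsDimerCover G M₂ p.2 ∧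
      p.1 ∩ p.2 = ω₁ ∩ ω₂ ∧ p.1 ∆ p.2 = ω₁ ∆ ω₂} ≃
      ({c : (symmGraph ω₁ ω₂).ConnectedComponent //
        ∀ v : V, (symmGraph ω₁ ω₂).connectedComponentMk v = c → degIn (ω₁ ∆ ω₂) v = 2} →
        Bool) := by
    refine Equiv.mk (fun p c => decide (rep c ∈ p.1.1))
      (fun f => ⟨(ω₁ ∩ ω₂ ∪ DDAux.selSet ω₁ ω₂ f,
          ω₁ ∩ ω₂ ∪ ((ω₁ ∆ ω₂) \ DDAux.selSet ω₁ ω₂ f)),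
        DDAux.psi_cover₁ hdisj h₁ h₂ f, DDAux.psi_cover₂ hdisj h₁ h₂ f,
        DDAux.psi_inter f, DDAux.psi_sd f⟩) ?_ ?_
    · intro p
      have h1 : ω₁ ∩ ω₂ ∪ DDAux.selSet ω₁ ω₂ (fun c => decide (rep c ∈ p.1.1)) = p.1.1 := by
        refine DDAux.sel_eq_sigma hdisj h₁ h₂ p.2.1 p.2.2.1 p.2.2.2.1 p.2.2.2.2 _ ?_
        intro c hc e' he1 he2 v hv hvc
        simp only [decide_eq_true_eq]
        have hD' : e' ∈ ω₁ ∆ ω₂ := Finset.mem_symmDiff.mpr (Or.inl ⟨he1, he2⟩)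
        have hcomp : (symmGraph ω₁ ω₂).connectedComponentMk (vtx ⟨c, hc⟩) =
            (symmGraph ω₁ ω₂).connectedComponentMk v := (hvtx2 ⟨c, hc⟩).trans hvc.symm
        have hcons := DDAux.consistent hdisj h₁ h₂ p.2.1 p.2.2.1 p.2.2.2.1 p.2.2.2.2
          (hrepD ⟨c, hc⟩) hD' (hvtx1 ⟨c, hc⟩) hv hcomp
        have hro := hrep1 ⟨c, hc⟩
        tauto
      have h2 := DDAux.sigma₂_eq p.2.2.2.1 p.2.2.2.2 h1
      exact Subtype.ext (Prod.ext_iff.mpr ⟨h1, h2⟩)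
    · intro f
      funext c
      show decide (rep c ∈ ω₁ ∩ ω₂ ∪ DDAux.selSet ω₁ ω₂ f) = f c
      have hnotI : rep c ∉ ω₁ ∩ ω₂ := fun h => hrep2 c (Finset.mem_inter.mp h).2
      have hsel : rep c ∈ DDAux.selSet ω₁ ω₂ f ↔ (rep c ∈ ω₁ ↔ f c = true) := by
        rw [DDAux.mem_selSet h₁ h₂ (hrepD c) (hvtx1 c), hvtx2 c]
        simp only [DDAux.bitc, dif_pos c.2]
      have hiff : rep c ∈ ω₁ ∩ ω₂ ∪ DDAux.selSet ω₁ ω₂ f ↔ f c = true := by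
        rw [Finset.mem_union]
        constructor
        · rintro (h | h)
          · exact absurd h hnotI
          · exact (hsel.mp h).mp (hrep1 c)
        · intro h
          exact Or.inr (hsel.mpr (iff_of_true (hrep1 c) h))
      cases hfc : f c
      · rw [decide_eq_false_iff_not]
        intro h
        have := hiff.mp h
        rw [hfc] at this
        simp at this
      · rw [decide_eq_true_eq]
        exact hiff.mpr hfc
  rw [Nat.card_congr equiv, Nat.card_fun]
  have hb : Nat.card Bool = 2 := by
    rw [Nat.card_eq_fintype_card]
    simp
  rw [hb]
  rfl
end

section
/- (Switching principle I, first identity.) Let G = (V,E) be a finite simple graph with edge weights K : E → ℂ, let M1, M2 ⊆ V be disjoint, and let x, y ∈ V ∖ (M1 ∪ M2) be distinct. Then for any finite list C of pairs of vertices taken from M1 ∪ M2, Z^{(2)}_{G,K}(M1 ∪ {x,y}, M2; x ↔ y and C) = Z^{(2)}_{G,K}(M1, M2 ∪ {x,y}; x ↔ y and C). -/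
open scoped Classical symmDiff
open Finset

/-- The double dimer partition function `Z²_{G,K}(M₁, M₂; C)` restricted by the
connection conditions `C`: a list of pairs `(u, v)` each required to lie in the
same connected component of the overlay `ω₁ Δ ω₂`. -/
noncomputable def Zdouble {V : Type*} [Fintype V] [DecidableEq V]
    (G : SimpleGraph V) (K : Sym2 V → ℂ) (M₁ M₂ : Finset V) (C : List (V × V)) : ℂ :=
  ∑ p ∈ Finset.univ.filter (fun p : Finset (Sym2 V) × Finset (Sym2 V) =>
      IsDimerCover G M₁ p.1 ∧ IsDimerCover G M₂ p.2 ∧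
      ∀ c ∈ C, (symmGraph p.1 p.2).Reachable c.1 c.2),
    (∏ b ∈ p.1, K b) * ∏ b ∈ p.2, K b

/-!
The overlay `ω₁ ∆ ω₂` of two dimer covers has maximum degree two, and degree at most one at the
monomers of either cover. As `x` and `y` are monomers of `ω₁` joined in the overlay, the overlay
component of `x` is a path from `x` to `y` whose interior vertices are matched in both covers.
Exchanging `ω₁` and `ω₂` along this path makes `x` and `y` monomers of the second cover instead of
the first, and changes neither the overlay (hence no connection condition) nor the weight
`χ_K(ω₁) χ_K(ω₂)`. It is an involution, hence a weight-preserving bijection between the two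
index sets.
-/

namespace SimpleGraph

variable {V : Type*} {H : SimpleGraph V} {x y v : V}

theorem Walk.IsPath.encard_neighborSet_toSubgraph_of_ne {p : H.Walk x y} (hp : p.IsPath)
    (hv : v ∈ p.support) (hvx : v ≠ x) (hvy : v ≠ y) :
    (p.toSubgraph.neighborSet v).encard = 2 := by
  obtain ⟨i, rfl, hi⟩ := Walk.mem_support_iff_exists_getVert.1 hv
  have hi0 : i ≠ 0 := by rintro rfl; exact hvx p.getVert_zero
  have hil : i < p.length := lt_of_le_of_ne hi (by rintro rfl; exact hvy p.getVert_length)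
  rw [← Set.Finite.cast_ncard_eq (p.finite_neighborSet_toSubgraph),
    hp.ncard_neighborSet_toSubgraph_internal_eq_two hi0 hil]
  rfl

theorem Walk.IsPath.toSubgraph_neighborSet_eq {p : H.Walk x y} (hp : p.IsPath) (hnil : ¬p.Nil)
    (hx : (H.neighborSet x).encard ≤ 1) (hy : (H.neighborSet y).encard ≤ 1)
    (hdeg : ∀ v, (H.neighborSet v).encard ≤ 2) (hv : v ∈ p.support) :
    p.toSubgraph.neighborSet v = H.neighborSet v := by
  refine p.finite_neighborSet_toSubgraph.eq_of_subset_of_encard_le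
    (p.toSubgraph.neighborSet_subset v) ?_
  by_cases hvx : v = x
  · subst hvx
    rwa [hp.neighborSet_toSubgraph_startpoint hnil, Set.encard_singleton]
  by_cases hvy : v = y
  · subst hvy
    rwa [hp.neighborSet_toSubgraph_endpoint hnil, Set.encard_singleton]
  rw [hp.encard_neighborSet_toSubgraph_of_ne hv hvx hvy]
  exact hdeg v

theorem Walk.IsPath.mem_support_of_reachable {p : H.Walk x y} (hp : p.IsPath) (hnil : ¬p.Nil)
    (hx : (H.neighborSet x).encard ≤ 1) (hy : (H.neighborSet y).encard ≤ 1)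
    (hdeg : ∀ v, (H.neighborSet v).encard ≤ 2) (hv : H.Reachable x v) : v ∈ p.support := by
  rw [← p.mem_verts_toSubgraph]
  refine hv.mem_subgraphVerts (fun u hu w hadj => ?_) p.start_mem_verts_toSubgraph
  rw [← Subgraph.mem_neighborSet, hp.toSubgraph_neighborSet_eq hnil hx hy hdeg
    (p.mem_verts_toSubgraph.1 hu)]
  exact hadj

/-- The component of `x` is a path from `x` to `y`, whose interior vertices have degree two. -/
theorem two_le_encard_neighborSet_of_reachable (hxy : x ≠ y) (hreach : H.Reachable x y)
    (hx : (H.neighborSet x).encard ≤ 1) (hy : (H.neighborSet y).encard ≤ 1)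
    (hdeg : ∀ v, (H.neighborSet v).encard ≤ 2) (hv : H.Reachable x v) (hvx : v ≠ x)
    (hvy : v ≠ y) : 2 ≤ (H.neighborSet v).encard := by
  obtain ⟨q⟩ := hreach
  have hp := q.toPath.2
  have hnil : ¬(q.toPath : H.Walk x y).Nil := Walk.not_nil_of_ne hxy
  have hsupp := hp.mem_support_of_reachable hnil hx hy hdeg hv
  rw [← hp.encard_neighborSet_toSubgraph_of_ne hsupp hvx hvy]
  exact Set.encard_mono (Subgraph.neighborSet_subset _ v)

end SimpleGraph

theorem Finset.prod_symmDiff_mul_prod_symmDiff {α β : Type*} [DecidableEq α] [CommMonoid β]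
    (f : α → β) {s t u : Finset α} (hu : u ⊆ s ∆ t) :
    (∏ a ∈ s ∆ u, f a) * ∏ a ∈ t ∆ u, f a = (∏ a ∈ s, f a) * ∏ a ∈ t, f a := by
  have hus : u \ s = t ∩ u := by
    ext a; have := @hu a; simp only [mem_sdiff, mem_inter, mem_symmDiff] at *; tauto
  have hut : u \ t = s ∩ u := by
    ext a; have := @hu a; simp only [mem_sdiff, mem_inter, mem_symmDiff] at *; tauto
  rw [symmDiff_def, symmDiff_def, sup_eq_union, sup_eq_union, prod_union disjoint_sdiff_sdiff,
    prod_union disjoint_sdiff_sdiff, hus, hut, ← prod_inter_mul_prod_sdiff s u,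
    ← prod_inter_mul_prod_sdiff t u]
  ac_rfl

section DoubleDimer

variable {V : Type*} {G : SimpleGraph V} {M M₁ M₂ : Finset V} {ω ω₁ ω₂ : Finset (Sym2 V)}
  {x y v : V}

namespace IsDimerCover

/-- Being a dimer cover is a condition on each vertex separately: its monomer status and the
edges through it. -/
theorem of_local
    (h : ∀ v, ∃ (M₀ : Finset V) (ω₀ : Finset (Sym2 V)), IsDimerCover G M₀ ω₀ ∧
      (v ∈ M ↔ v ∈ M₀) ∧ ∀ e, v ∈ e → (e ∈ ω ↔ e ∈ ω₀)) :
    IsDimerCover G M ω := by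
  refine ⟨fun e he => ?_, fun v hv e he hve => ?_, fun v hv => ?_⟩
  · induction e using Sym2.ind with
    | _ a b =>
      obtain ⟨M₀, ω₀, h₀, -, hω⟩ := h a
      exact h₀.1 _ ((hω _ (Sym2.mem_mk_left a b)).1 he)
  · obtain ⟨M₀, ω₀, h₀, hM, hω⟩ := h v
    exact h₀.2.1 v (hM.1 hv) e ((hω e hve).1 he) hve
  · obtain ⟨M₀, ω₀, h₀, hM, hω⟩ := h v
    refine (existsUnique_congr fun e => ?_).2 (h₀.2.2 v (hM.not.1 hv))
    exact ⟨fun ⟨he, hve⟩ => ⟨(hω e hve).1 he, hve⟩, fun ⟨he, hve⟩ => ⟨(hω e hve).2 he, hve⟩⟩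

theorem encard_setOf_mem_le_one (h : IsDimerCover G M ω) (v : V) :
    {w | s(v, w) ∈ ω}.encard ≤ 1 := by
  refine Set.encard_le_one_iff.2 fun a b ha hb => ?_
  by_cases hv : v ∈ M
  · exact absurd (Sym2.mem_mk_left v a) (h.2.1 v hv _ ha)
  · obtain ⟨e, -, he⟩ := h.2.2 v hv
    exact Sym2.congr_right.1 ((he _ ⟨ha, Sym2.mem_mk_left v a⟩).trans
      (he _ ⟨hb, Sym2.mem_mk_left v b⟩).symm)

theorem setOf_mem_eq_empty (h : IsDimerCover G M ω) (hv : v ∈ M) : {w | s(v, w) ∈ ω} = ∅ :=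
  Set.eq_empty_of_forall_notMem fun w hw => h.2.1 v hv _ hw (Sym2.mem_mk_left v w)

end IsDimerCover

noncomputable def componentEdges (x : V) (s : Finset (Sym2 V)) : Finset (Sym2 V) :=
  s.filter fun e => ∃ v ∈ e, (SimpleGraph.fromEdgeSet (s : Set (Sym2 V))).Reachable x v

theorem componentEdges_subset (x : V) (s : Finset (Sym2 V)) : componentEdges x s ⊆ s :=
  filter_subset _ _

theorem mem_componentEdges {s : Finset (Sym2 V)} {e : Sym2 V} (hve : v ∈ e) :
    e ∈ componentEdges x s ↔ e ∈ s ∧ (SimpleGraph.fromEdgeSet (s : Set (Sym2 V))).Reachable x v := by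
  refine ⟨fun h => ?_, fun ⟨he, hv⟩ => mem_filter.2 ⟨he, v, hve, hv⟩⟩
  obtain ⟨he, u, hue, hu⟩ := mem_filter.1 h
  refine ⟨he, ?_⟩
  by_cases huv : u = v
  · exact huv ▸ hu
  · have hadj : (SimpleGraph.fromEdgeSet (s : Set (Sym2 V))).Adj u v :=
      (SimpleGraph.fromEdgeSet_adj _).2 ⟨(Sym2.mem_and_mem_iff huv).1 ⟨hue, hve⟩ ▸ he, huv⟩
    exact hu.trans hadj.reachable

variable [DecidableEq V]

theorem symmGraph_comm (ω₁ ω₂ : Finset (Sym2 V)) : symmGraph ω₁ ω₂ = symmGraph ω₂ ω₁ := by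
  rw [symmGraph, symmGraph, symmDiff_comm]

theorem neighborSet_symmGraph_subset (ω₁ ω₂ : Finset (Sym2 V)) (v : V) :
    (symmGraph ω₁ ω₂).neighborSet v ⊆ {w | s(v, w) ∈ ω₁} ∪ {w | s(v, w) ∈ ω₂} := by
  intro w hw
  simp only [symmGraph, SimpleGraph.mem_neighborSet, SimpleGraph.fromEdgeSet_adj, coe_symmDiff,
    Set.mem_symmDiff, mem_coe] at hw
  simp only [Set.mem_union, Set.mem_ofPred_eq]
  tauto

theorem encard_neighborSet_symmGraph_le_two (h₁ : IsDimerCover G M₁ ω₁)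
    (h₂ : IsDimerCover G M₂ ω₂) (v : V) : ((symmGraph ω₁ ω₂).neighborSet v).encard ≤ 2 :=
  calc _ ≤ _ := Set.encard_mono (neighborSet_symmGraph_subset ω₁ ω₂ v)
    _ ≤ _ := Set.encard_union_le _ _
    _ ≤ 1 + 1 := add_le_add (h₁.encard_setOf_mem_le_one v)
        (h₂.encard_setOf_mem_le_one v)

theorem encard_neighborSet_symmGraph_le_one_of_mem_left (h₁ : IsDimerCover G M₁ ω₁)
    (h₂ : IsDimerCover G M₂ ω₂) (hv : v ∈ M₁) :
    ((symmGraph ω₁ ω₂).neighborSet v).encard ≤ 1 :=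
  calc _ ≤ _ := Set.encard_mono (neighborSet_symmGraph_subset ω₁ ω₂ v)
    _ ≤ _ := Set.encard_union_le _ _
    _ ≤ 0 + 1 := by
      rw [h₁.setOf_mem_eq_empty hv, Set.encard_empty]
      exact add_le_add le_rfl (h₂.encard_setOf_mem_le_one v)

theorem encard_neighborSet_symmGraph_le_one_of_mem_right (h₁ : IsDimerCover G M₁ ω₁)
    (h₂ : IsDimerCover G M₂ ω₂) (hv : v ∈ M₂) :
    ((symmGraph ω₁ ω₂).neighborSet v).encard ≤ 1 :=
  symmGraph_comm ω₁ ω₂ ▸ encard_neighborSet_symmGraph_le_one_of_mem_left h₂ h₁ hv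

theorem notMem_of_reachable_symmGraph (h₁ : IsDimerCover G M₁ ω₁) (h₂ : IsDimerCover G M₂ ω₂)
    (hx : x ∈ M₁) (hy : y ∈ M₁) (hxy : x ≠ y) (hreach : (symmGraph ω₁ ω₂).Reachable x y)
    (hv : (symmGraph ω₁ ω₂).Reachable x v) (hvx : v ≠ x) (hvy : v ≠ y) : v ∉ M₁ ∧ v ∉ M₂ := by
  have hdeg := SimpleGraph.two_le_encard_neighborSet_of_reachable hxy hreach
    (encard_neighborSet_symmGraph_le_one_of_mem_left h₁ h₂ hx)
    (encard_neighborSet_symmGraph_le_one_of_mem_left h₁ h₂ hy)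
    (encard_neighborSet_symmGraph_le_two h₁ h₂) hv hvx hvy
  have hlt : ¬ (2 : ℕ∞) ≤ 1 := by norm_num
  exact ⟨fun hv₁ => hlt (hdeg.trans (encard_neighborSet_symmGraph_le_one_of_mem_left h₁ h₂ hv₁)),
    fun hv₂ => hlt (hdeg.trans (encard_neighborSet_symmGraph_le_one_of_mem_right h₁ h₂ hv₂))⟩

noncomputable def switch (x : V) (p : Finset (Sym2 V) × Finset (Sym2 V)) :
    Finset (Sym2 V) × Finset (Sym2 V) :=
  (p.1 ∆ componentEdges x (p.1 ∆ p.2), p.2 ∆ componentEdges x (p.1 ∆ p.2))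

section switch

variable (x : V) (p : Finset (Sym2 V) × Finset (Sym2 V))

theorem switch_fst_symmDiff_switch_snd : (switch x p).1 ∆ (switch x p).2 = p.1 ∆ p.2 := by
  rw [switch, symmDiff_symmDiff_symmDiff_comm, symmDiff_self, symmDiff_bot]

theorem symmGraph_switch : symmGraph (switch x p).1 (switch x p).2 = symmGraph p.1 p.2 := by
  rw [symmGraph, switch_fst_symmDiff_switch_snd, symmGraph]

theorem switch_switch : switch x (switch x p) = p := by
  rw [switch, switch_fst_symmDiff_switch_snd, switch, symmDiff_symmDiff_cancel_right,
    symmDiff_symmDiff_cancel_right]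

theorem switch_swap : switch x p.swap = (switch x p).swap := by
  rw [switch, switch, Prod.fst_swap, Prod.snd_swap, symmDiff_comm p.2 p.1, Prod.swap_prod_mk]

end switch

section mem_switch

variable {p : Finset (Sym2 V) × Finset (Sym2 V)} {e : Sym2 V}

theorem mem_switch_fst_of_reachable (hv : (symmGraph p.1 p.2).Reachable x v) (hve : v ∈ e) :
    e ∈ (switch x p).1 ↔ e ∈ p.2 := by
  rw [switch, mem_symmDiff, mem_componentEdges hve, mem_symmDiff]
  simp only [symmGraph] at hv
  tauto

theorem mem_switch_fst_of_not_reachable (hv : ¬(symmGraph p.1 p.2).Reachable x v)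
    (hve : v ∈ e) : e ∈ (switch x p).1 ↔ e ∈ p.1 := by
  rw [switch, mem_symmDiff, mem_componentEdges hve]
  simp only [symmGraph] at hv
  tauto

theorem mem_switch_snd_of_reachable (hv : (symmGraph p.1 p.2).Reachable x v) (hve : v ∈ e) :
    e ∈ (switch x p).2 ↔ e ∈ p.1 := by
  rw [← Prod.fst_swap, ← switch_swap]
  exact mem_switch_fst_of_reachable (by rwa [Prod.fst_swap, Prod.snd_swap, symmGraph_comm]) hve

theorem mem_switch_snd_of_not_reachable (hv : ¬(symmGraph p.1 p.2).Reachable x v)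
    (hve : v ∈ e) : e ∈ (switch x p).2 ↔ e ∈ p.2 := by
  rw [← Prod.fst_swap, ← switch_swap]
  exact mem_switch_fst_of_not_reachable (by rwa [Prod.fst_swap, Prod.snd_swap, symmGraph_comm]) hve

end mem_switch

theorem isDimerCover_switch {p : Finset (Sym2 V) × Finset (Sym2 V)}
    (h₁ : IsDimerCover G (M₁ ∪ {x, y}) p.1) (h₂ : IsDimerCover G M₂ p.2)
    (hx : x ∉ M₁ ∪ M₂) (hy : y ∉ M₁ ∪ M₂) (hxy : x ≠ y)
    (hreach : (symmGraph p.1 p.2).Reachable x y) :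
    IsDimerCover G M₁ (switch x p).1 ∧ IsDimerCover G (M₂ ∪ {x, y}) (switch x p).2 := by
  have hM : ∀ v, (symmGraph p.1 p.2).Reachable x v → v ∉ M₁ ∧ v ∉ M₂ := by
    intro v hv
    by_cases hvx : v = x
    · simpa [hvx, not_or] using hx
    by_cases hvy : v = y
    · simpa [hvy, not_or] using hy
    obtain ⟨hv₁, hv₂⟩ :=
      notMem_of_reachable_symmGraph h₁ h₂ (by simp) (by simp) hxy hreach hv hvx hvy
    exact ⟨fun h => hv₁ (mem_union_left _ h), hv₂⟩
  have hne : ∀ v, ¬(symmGraph p.1 p.2).Reachable x v → v ≠ x ∧ v ≠ y := fun v hv =>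
    ⟨by rintro rfl; exact hv .rfl, by rintro rfl; exact hv hreach⟩
  constructor <;> refine IsDimerCover.of_local fun v => ?_ <;>
    by_cases hv : (symmGraph p.1 p.2).Reachable x v
  · exact ⟨M₂, p.2, h₂, by simp [hM v hv], fun e => mem_switch_fst_of_reachable hv⟩
  · exact ⟨_, p.1, h₁, by simp [hne v hv], fun e => mem_switch_fst_of_not_reachable hv⟩
  · exact ⟨_, p.1, h₁, by simp [hM v hv], fun e => mem_switch_snd_of_reachable hv⟩
  · exact ⟨M₂, p.2, h₂, by simp [hne v hv], fun e => mem_switch_snd_of_not_reachable hv⟩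

theorem isDimerCover_switch_of_snd {p : Finset (Sym2 V) × Finset (Sym2 V)}
    (h₁ : IsDimerCover G M₁ p.1) (h₂ : IsDimerCover G (M₂ ∪ {x, y}) p.2)
    (hx : x ∉ M₁ ∪ M₂) (hy : y ∉ M₁ ∪ M₂) (hxy : x ≠ y)
    (hreach : (symmGraph p.1 p.2).Reachable x y) :
    IsDimerCover G (M₁ ∪ {x, y}) (switch x p).1 ∧ IsDimerCover G M₂ (switch x p).2 := by
  have := isDimerCover_switch (p := p.swap) h₂ h₁ (by rwa [union_comm]) (by rwa [union_comm]) hxy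
    (by rwa [Prod.fst_swap, Prod.snd_swap, symmGraph_comm])
  rw [switch_swap] at this
  exact this.symm

end DoubleDimer

theorem switching_principle_I_first_general {V : Type*} [Fintype V] [DecidableEq V]
    (G : SimpleGraph V) (K : Sym2 V → ℂ) (M₁ M₂ : Finset V) (x y : V)
    (hxy : x ≠ y)
    (hx : x ∉ M₁ ∪ M₂) (hy : y ∉ M₁ ∪ M₂)
    (C : List (V × V)) :
    Zdouble G K (M₁ ∪ {x, y}) M₂ ((x, y) :: C) =
      Zdouble G K M₁ (M₂ ∪ {x, y}) ((x, y) :: C) := by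
  unfold Zdouble
  refine sum_nbij' (switch x) (switch x) ?_ ?_ (fun p _ => switch_switch x p)
    (fun p _ => switch_switch x p) fun p _ =>
      (prod_symmDiff_mul_prod_symmDiff K (componentEdges_subset x (p.1 ∆ p.2))).symm
  all_goals
    intro p hp
    simp only [mem_filter, mem_univ, true_and, symmGraph_switch] at hp ⊢
    obtain ⟨h₁, h₂, hC⟩ := hp
  · obtain ⟨h₁', h₂'⟩ := isDimerCover_switch h₁ h₂ hx hy hxy (hC _ List.mem_cons_self)
    exact ⟨h₁', h₂', hC⟩
  · obtain ⟨h₁', h₂'⟩ := isDimerCover_switch_of_snd h₁ h₂ hx hy hxy (hC _ List.mem_cons_self)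
    exact ⟨h₁', h₂', hC⟩

/-- Switching principle I, first identity: the pair of monomers `{x, y}` connected
by a path of the overlay may be moved from the first monomer set to the second. -/
theorem switching_principle_I_first {V : Type*} [Fintype V] [DecidableEq V]
    (G : SimpleGraph V) (K : Sym2 V → ℂ) (M₁ M₂ : Finset V) (x y : V)
    (hdisj : Disjoint M₁ M₂) (hxy : x ≠ y)
    (hx : x ∉ M₁ ∪ M₂) (hy : y ∉ M₁ ∪ M₂)
    (C : List (V × V)) (hC : ∀ c ∈ C, c.1 ∈ M₁ ∪ M₂ ∧ c.2 ∈ M₁ ∪ M₂) :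
    Zdouble G K (M₁ ∪ {x, y}) M₂ ((x, y) :: C) =
      Zdouble G K M₁ (M₂ ∪ {x, y}) ((x, y) :: C) :=
  switching_principle_I_first_general G K M₁ M₂ x y hxy hx hy C
end

section
/- (Switching principle I, second identity.) Let G = (V,E) be a finite simple graph with edge weights K : E → ℂ, let M1, M2 ⊆ V be disjoint, and let x, y ∈ V ∖ (M1 ∪ M2) be distinct. Then for any finite list C of pairs of vertices taken from M1 ∪ M2, Z^{(2)}_{G,K}(M1 ∪ {x}, M2 ∪ {y}; x ↔ y and C) = Z^{(2)}_{G,K}(M1 ∪ {y}, M2 ∪ {x}; x ↔ y and C). -/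
/-!
Flip both dimer covers along a chosen `x`–`y` path `P` of the overlay,
`(ω₁, ω₂) ↦ (ω₁ ∆ P, ω₂ ∆ P)`. Since `P ⊆ ω₁ ∆ ω₂`, at a vertex of even `P`-degree (0 or 2)
the flip keeps the number of incident dimers, while at the two odd vertices `x` and `y` it moves
the monomer of `ω₁` from `x` to `y` and that of `ω₂` from `y` to `x`. The overlay is unchanged,
so the connection constraints and the chosen path are preserved; hence the flip is a
weight-preserving involution between the two index sets.
-/

open scoped Classical symmDiff
open Finset

namespace Finset

variable {α : Type*}

theorem eq_of_subset_of_card_le_one_of_odd {s Q : Finset α} (hQ : Q ⊆ s) (hs : #s ≤ 1)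
    (hodd : Odd #Q) : Q = s :=
  eq_of_subset_of_card_le hQ (hs.trans hodd.pos)

variable [DecidableEq α]

theorem card_symmDiff_le_add (s t : Finset α) : #(s ∆ t) ≤ #s + #t :=
  (card_le_card symmDiff_subset_union).trans (card_union_le s t)

theorem card_symmDiff_eq_of_subset_symmDiff {s t Q : Finset α} (hs : #s ≤ 1) (ht : #t ≤ 1)
    (hQ : Q ⊆ s ∆ t) (heven : Even #Q) : #(s ∆ Q) = #s := by
  have hst := card_symmDiff_le_add s t
  have hQ2 : #Q ≤ 2 := (card_le_card hQ).trans (by omega)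
  obtain hQ0 | hQ2 : #Q = 0 ∨ #Q = 2 := by
    obtain ⟨k, hk⟩ := heven
    omega
  · rw [card_eq_zero.mp hQ0, ← bot_eq_empty, symmDiff_bot]
  · have hQst : Q = s ∆ t := eq_of_subset_of_card_le hQ (by omega)
    have := card_le_card hQ
    rw [hQst, symmDiff_symmDiff_cancel_left]
    omega

theorem prod_symmDiff_mul_prod_symmDiff_s6 {β : Type*} [CommMonoid β] (f : α → β)
    {s t Q : Finset α} (hQ : Q ⊆ s ∆ t) :
    (∏ a ∈ s ∆ Q, f a) * ∏ a ∈ t ∆ Q, f a = (∏ a ∈ s, f a) * ∏ a ∈ t, f a := by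
  have hunion : (s ∆ Q) ∪ (t ∆ Q) = s ∪ t := by
    ext a
    have := @hQ a
    simp only [mem_union, mem_symmDiff] at this ⊢
    tauto
  have hinter : (s ∆ Q) ∩ (t ∆ Q) = s ∩ t := by
    ext a
    have := @hQ a
    simp only [mem_inter, mem_symmDiff] at this ⊢
    tauto
  rw [← prod_union_inter, hunion, hinter, prod_union_inter]

theorem filter_symmDiff (p : α → Prop) [DecidablePred p] (s t : Finset α) :
    (s ∆ t).filter p = s.filter p ∆ t.filter p := by
  ext a
  simp only [mem_symmDiff, mem_filter]
  tauto

end Finset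

section

variable {V : Type*} [DecidableEq V]

theorem isDimerCover_iff {G : SimpleGraph V} {M : Finset V} {ω : Finset (Sym2 V)} :
    IsDimerCover G M ω ↔
      (∀ e ∈ ω, e ∈ G.edgeSet) ∧ ∀ v, #{e ∈ ω | v ∈ e} = if v ∈ M then 0 else 1 := by
  refine and_congr_right fun _ =>
    ⟨fun ⟨hM, hcompl⟩ v => ?_, fun h => ⟨fun v hv => ?_, fun v hv => ?_⟩⟩
  · split_ifs with hv
    · exact card_eq_zero.mpr (filter_eq_empty_iff.mpr fun e he => hM v hv e he)
    · obtain ⟨e, he, huniq⟩ := hcompl v hv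
      exact card_eq_one.mpr ⟨e, eq_singleton_iff_unique_mem.mpr
        ⟨mem_filter.mpr he, fun f hf => huniq f (mem_filter.mp hf)⟩⟩
  · have := h v
    rw [if_pos hv, card_eq_zero, filter_eq_empty_iff] at this
    exact fun e he => this he
  · have := h v
    rw [if_neg hv, card_eq_one] at this
    obtain ⟨e, he⟩ := this
    obtain ⟨hmem, huniq⟩ := eq_singleton_iff_unique_mem.mp he
    exact ⟨e, mem_filter.mp hmem, fun f hf => huniq f (mem_filter.mpr hf)⟩

theorem IsDimerCover.card_filter_mem_le_one {G : SimpleGraph V} {M : Finset V}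
    {ω : Finset (Sym2 V)} (h : IsDimerCover G M ω) (v : V) : #{e ∈ ω | v ∈ e} ≤ 1 := by
  rw [(isDimerCover_iff.mp h).2 v]
  split_ifs <;> omega

theorem SimpleGraph.Walk.IsTrail.odd_card_filter_mem_iff {H : SimpleGraph V} {x y : V}
    {p : H.Walk x y} (hp : p.IsTrail) (v : V) :
    Odd #{e ∈ p.edges.toFinset | v ∈ e} ↔ v ∈ ({x} ∆ {y} : Finset V) := by
  rw [List.filter_toFinset, List.toFinset_card_of_nodup (hp.edges_nodup.filter _),
    ← List.countP_eq_length_filter, ← Nat.not_even_iff_odd, hp.even_countP_edges_iff v,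
    mem_symmDiff, mem_singleton, mem_singleton]
  grind

theorem IsDimerCover.symmDiff {G : SimpleGraph V} {M₁ M₂ : Finset V} {x y : V}
    {ω₁ ω₂ Q : Finset (Sym2 V)} (hx : x ∉ M₁)
    (h₁ : IsDimerCover G (M₁ ∪ {x}) ω₁) (h₂ : IsDimerCover G (M₂ ∪ {y}) ω₂)
    (hQ : Q ⊆ ω₁ ∆ ω₂) (hodd : ∀ v, Odd #{e ∈ Q | v ∈ e} ↔ v ∈ ({x} ∆ {y} : Finset V)) :
    IsDimerCover G (M₁ ∪ {y}) (ω₁ ∆ Q) := by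
  have hG₁ := (isDimerCover_iff.mp h₁).1
  have hG₂ := (isDimerCover_iff.mp h₂).1
  refine isDimerCover_iff.mpr ⟨fun e he => ?_, fun v => ?_⟩
  · rcases mem_symmDiff.mp he with ⟨he₁, -⟩ | ⟨heQ, -⟩
    · exact hG₁ e he₁
    · rcases mem_symmDiff.mp (hQ heQ) with ⟨he₁, -⟩ | ⟨he₂, -⟩
      exacts [hG₁ e he₁, hG₂ e he₂]
  have hQv : {e ∈ Q | v ∈ e} ⊆ {e ∈ ω₁ | v ∈ e} ∆ {e ∈ ω₂ | v ∈ e} := by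
    rw [← filter_symmDiff]
    exact filter_subset_filter _ hQ
  have hcard₁ := (isDimerCover_iff.mp h₁).2 v
  rw [filter_symmDiff]
  by_cases hv : Odd #{e ∈ Q | v ∈ e}
  · have hvxy := (hodd v).mp hv
    rw [mem_symmDiff, mem_singleton, mem_singleton] at hvxy
    rcases hvxy with ⟨rfl, hvy⟩ | ⟨rfl, hvx⟩
    · -- `v = x` is a monomer of `ω₁`, so the only edge of `ω₁ ∆ Q` at `v` is the path edge.
      rw [if_pos (by simp), card_eq_zero] at hcard₁
      rw [hcard₁, ← bot_eq_empty, bot_symmDiff] at hQv ⊢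
      rw [if_neg (by simp [hx, hvy])]
      have := (card_le_card hQv).trans (h₂.card_filter_mem_le_one v)
      have := hv.pos
      omega
    · have hcard₂ := (isDimerCover_iff.mp h₂).2 v
      rw [if_pos (by simp), card_eq_zero] at hcard₂
      rw [hcard₂, ← bot_eq_empty, symmDiff_bot] at hQv
      rw [eq_of_subset_of_card_le_one_of_odd hQv (h₁.card_filter_mem_le_one v) hv,
        symmDiff_self, if_pos (by simp)]
      rfl
  · rw [card_symmDiff_eq_of_subset_symmDiff (h₁.card_filter_mem_le_one v)
      (h₂.card_filter_mem_le_one v) hQv (Nat.not_odd_iff_even.mp hv), hcard₁]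
    rw [hodd, mem_symmDiff, mem_singleton, mem_singleton] at hv
    simp only [mem_union, mem_singleton]
    grind

noncomputable def pathEdges (H : SimpleGraph V) (x y : V) : Finset (Sym2 V) :=
  if h : H.Reachable x y then h.some.bypass.edges.toFinset else ∅

theorem pathEdges_subset_symmDiff (ω₁ ω₂ : Finset (Sym2 V)) (x y : V) :
    pathEdges (symmGraph ω₁ ω₂) x y ⊆ ω₁ ∆ ω₂ := by
  intro e he
  unfold pathEdges at he
  split_ifs at he with h
  · have := h.some.bypass.edges_subset_edgeSet (List.mem_toFinset.mp he)
    rw [symmGraph, SimpleGraph.edgeSet_fromEdgeSet] at this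
    exact this.1
  · exact absurd he (notMem_empty e)

theorem odd_card_filter_mem_pathEdges_iff {H : SimpleGraph V} {x y : V} (h : H.Reachable x y)
    (v : V) : Odd #{e ∈ pathEdges H x y | v ∈ e} ↔ v ∈ ({x} ∆ {y} : Finset V) := by
  rw [pathEdges, dif_pos h]
  exact h.some.bypass_isPath.isTrail.odd_card_filter_mem_iff v

noncomputable def pathFlip (x y : V) (p : Finset (Sym2 V) × Finset (Sym2 V)) :
    Finset (Sym2 V) × Finset (Sym2 V) :=
  (p.1 ∆ pathEdges (symmGraph p.1 p.2) x y, p.2 ∆ pathEdges (symmGraph p.1 p.2) x y)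

theorem symmGraph_pathFlip (x y : V) (p : Finset (Sym2 V) × Finset (Sym2 V)) :
    symmGraph (pathFlip x y p).1 (pathFlip x y p).2 = symmGraph p.1 p.2 := by
  simp only [pathFlip, symmGraph, symmDiff_symmDiff_symmDiff_comm, symmDiff_self,
    symmDiff_bot]

theorem pathFlip_pathFlip (x y : V) (p : Finset (Sym2 V) × Finset (Sym2 V)) :
    pathFlip x y (pathFlip x y p) = p := by
  conv_lhs => rw [pathFlip, symmGraph_pathFlip]
  simp only [pathFlip, symmDiff_symmDiff_cancel_right]

theorem prod_mul_prod_pathFlip {β : Type*} [CommMonoid β] (f : Sym2 V → β) (x y : V)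
    (p : Finset (Sym2 V) × Finset (Sym2 V)) :
    (∏ e ∈ (pathFlip x y p).1, f e) * ∏ e ∈ (pathFlip x y p).2, f e =
      (∏ e ∈ p.1, f e) * ∏ e ∈ p.2, f e :=
  prod_symmDiff_mul_prod_symmDiff_s6 f (pathEdges_subset_symmDiff p.1 p.2 x y)

theorem isDimerCover_pathFlip {G : SimpleGraph V} {M₁ M₂ : Finset V} {x y a b : V}
    (hx : x ∉ M₁) (hy : y ∉ M₂) (hab : ({a} ∆ {b} : Finset V) = {x} ∆ {y})
    {p : Finset (Sym2 V) × Finset (Sym2 V)}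
    (h₁ : IsDimerCover G (M₁ ∪ {x}) p.1) (h₂ : IsDimerCover G (M₂ ∪ {y}) p.2)
    (hreach : (symmGraph p.1 p.2).Reachable a b) :
    IsDimerCover G (M₁ ∪ {y}) (pathFlip a b p).1 ∧
      IsDimerCover G (M₂ ∪ {x}) (pathFlip a b p).2 := by
  have hQ := pathEdges_subset_symmDiff p.1 p.2 a b
  have hodd v := (odd_card_filter_mem_pathEdges_iff hreach v).trans (by rw [hab])
  refine ⟨h₁.symmDiff hx h₂ hQ hodd, h₂.symmDiff hy h₁ (symmDiff_comm p.1 p.2 ▸ hQ) ?_⟩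
  simpa only [symmDiff_comm ({y} : Finset V)] using hodd

end

theorem switching_principle_I_second_general {V : Type*} [Fintype V] [DecidableEq V]
    (G : SimpleGraph V) (K : Sym2 V → ℂ) (M₁ M₂ : Finset V) (x y : V)
    (hx : x ∉ M₁ ∪ M₂) (hy : y ∉ M₁ ∪ M₂)
    (C : List (V × V)) :
    Zdouble G K (M₁ ∪ {x}) (M₂ ∪ {y}) ((x, y) :: C) =
      Zdouble G K (M₁ ∪ {y}) (M₂ ∪ {x}) ((x, y) :: C) := by
  simp only [mem_union, not_or] at hx hy
  unfold Zdouble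
  refine sum_nbij' (pathFlip x y) (pathFlip x y) ?_ ?_ (fun p _ => pathFlip_pathFlip x y p)
    (fun p _ => pathFlip_pathFlip x y p) (fun p _ => (prod_mul_prod_pathFlip K x y p).symm)
  · intro p hp
    simp only [mem_filter, mem_univ, true_and, symmGraph_pathFlip] at hp ⊢
    obtain ⟨h₁, h₂, hC⟩ := hp
    exact and_assoc.mp
      ⟨isDimerCover_pathFlip hx.1 hy.2 rfl h₁ h₂ (hC _ List.mem_cons_self), hC⟩
  · intro p hp
    simp only [mem_filter, mem_univ, true_and, symmGraph_pathFlip] at hp ⊢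
    obtain ⟨h₁, h₂, hC⟩ := hp
    exact and_assoc.mp
      ⟨isDimerCover_pathFlip hy.1 hx.2 (symmDiff_comm _ _) h₁ h₂ (hC _ List.mem_cons_self), hC⟩

/-- Switching principle I, second identity: the monomers `x` and `y`, connected by
a path of the overlay, may be exchanged between the two monomer sets. -/
theorem switching_principle_I_second {V : Type*} [Fintype V] [DecidableEq V]
    (G : SimpleGraph V) (K : Sym2 V → ℂ) (M₁ M₂ : Finset V) (x y : V)
    (hdisj : Disjoint M₁ M₂) (hxy : x ≠ y)
    (hx : x ∉ M₁ ∪ M₂) (hy : y ∉ M₁ ∪ M₂)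
    (C : List (V × V)) (hC : ∀ c ∈ C, c.1 ∈ M₁ ∪ M₂ ∧ c.2 ∈ M₁ ∪ M₂) :
    Zdouble G K (M₁ ∪ {x}) (M₂ ∪ {y}) ((x, y) :: C) =
      Zdouble G K (M₁ ∪ {y}) (M₂ ∪ {x}) ((x, y) :: C) :=
  switching_principle_I_second_general G K M₁ M₂ x y hx hy C
end

section
/- Let G = (V,E) be a finite simple graph with edge weights K : E → ℂ, and let M = {x_1, …, x_{2n}} ⊆ V be a set of 2n distinct vertices. Then for every ω1 ∈ Ω_G (a perfect matching of G) and every ω2 ∈ Ω_G(M), each vertex x ∈ M is connected in ω1 Δ ω2 to exactly one vertex y ∈ M ∖ {x}. Consequently, Σ_{k=2}^{2n} Z^{(2)}_{G,K}(∅, M; x_1 ↔ x_k) = Z_{G,K} · Z_{G,K}(M). -/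
open scoped Classical symmDiff
open Finset

/-- The monomer-depleted weighted dimer partition function `Z_{G,K}(M)`. -/
noncomputable def Zdimer {V : Type*} [Fintype V] [DecidableEq V]
    (G : SimpleGraph V) (K : Sym2 V → ℂ) (M : Finset V) : ℂ :=
  ∑ ω ∈ Finset.univ.filter (IsDimerCover G M), ∏ b ∈ ω, K b

/-!
In the overlay `ω₁ Δ ω₂` a vertex has degree `1` exactly when it is a monomer of one cover
but not of the other, and degree `0` or `2` otherwise. In a connected graph of maximum degree
`2` the handshake lemma forces the number of degree-`1` vertices to be even, while
`|E| ≥ |V| - 1` bounds it by `2`; so the component of a monomer contains exactly one other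
monomer. Summing over `k` the pairs `(ω₁, ω₂)` with `x 1 ↔ x k` therefore counts every pair
of `Ω_G × Ω_G(M)` exactly once.
-/

theorem Finset.card_symmDiff_add_two_mul_card_inter {α : Type*} [DecidableEq α]
    (s t : Finset α) : #(s ∆ t) + 2 * #(s ∩ t) = #s + #t := by
  rw [symmDiff_eq_sup_sdiff_inf, sup_eq_union, inf_eq_inter,
    card_sdiff_of_subset inter_subset_union]
  have := card_union_add_card_inter s t
  have := card_le_card (inter_subset_union (s := s) (t := t))
  omega

theorem Finset.sum_ite_of_existsUnique {ι β : Type*} [AddCommMonoid β] {s : Finset ι}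
    {p : ι → Prop} [DecidablePred p] (h : ∃! i, i ∈ s ∧ p i) (b : β) :
    ∑ i ∈ s, (if p i then b else 0) = b := by
  obtain ⟨j, ⟨hj, hpj⟩, huniq⟩ := h
  rw [sum_eq_single_of_mem j hj fun i hi hij => if_neg fun hpi => hij (huniq i ⟨hi, hpi⟩),
    if_pos hpj]

theorem Finset.existsUnique_mem_erase_of_existsUnique_image {ι α : Type*} [DecidableEq ι]
    [DecidableEq α] {s : Finset ι} {x : ι → α} (hx : Set.InjOn x s) {i : ι} (hi : i ∈ s)
    {P : α → Prop} (h : ∃! y, y ∈ s.image x ∧ y ≠ x i ∧ P y) :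
    ∃! k, k ∈ s.erase i ∧ P (x k) := by
  obtain ⟨_, ⟨hy, hyi, hPy⟩, huniq⟩ := h
  obtain ⟨j, hj, rfl⟩ := mem_image.1 hy
  refine ⟨j, ⟨mem_erase.2 ⟨fun hji => hyi (hji ▸ rfl), hj⟩, hPy⟩, ?_⟩
  rintro k ⟨hk, hPk⟩
  obtain ⟨hki, hks⟩ := mem_erase.1 hk
  exact hx hks hj (huniq _ ⟨mem_image_of_mem x hks, fun hxk => hki (hx hks hi hxk), hPk⟩)

namespace SimpleGraph

variable {W : Type*} [Fintype W] {H : SimpleGraph W} [DecidableRel H.Adj]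

theorem Connected.card_filter_degree_eq_one_le_two (hc : H.Connected)
    (hdeg : ∀ u, H.degree u ≤ 2) : #{u | H.degree u = 1} ≤ 2 := by
  have hsum : ∑ u, (H.degree u + if H.degree u = 1 then 1 else 0) ≤ ∑ _u : W, 2 :=
    sum_le_sum fun u _ => by have := hdeg u; split_ifs <;> omega
  rw [sum_add_distrib, ← card_filter, sum_degrees_eq_twice_card_edges, sum_const, card_univ,
    smul_eq_mul] at hsum
  have hedges := hc.card_vert_le_card_edgeSet_add_one
  rw [Nat.card_eq_fintype_card, Nat.card_eq_fintype_card, ← edgeFinset_card] at hedges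
  omega

theorem Connected.existsUnique_ne_degree_eq_one [DecidableEq W] (hc : H.Connected)
    (hdeg : ∀ u, H.degree u ≤ 2) {v : W} (hv : H.degree v = 1) :
    ∃! w, w ≠ v ∧ H.degree w = 1 := by
  have hodd : ∀ w, Odd (H.degree w) ↔ H.degree w = 1 := fun w => by
    have := hdeg w; rw [Nat.odd_iff]; omega
  have hparity := H.odd_card_odd_degree_vertices_ne v ((hodd v).2 hv)
  simp only [hodd] at hparity
  have hle : #{w | w ≠ v ∧ H.degree w = 1} ≤ 1 := by
    have hsub : ({w | w ≠ v ∧ H.degree w = 1} : Finset W) ⊆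
        ({w | H.degree w = 1} : Finset W).erase v := fun w hw => by
      simp only [mem_filter, mem_univ, true_and, mem_erase] at hw ⊢; exact hw
    have := card_le_card hsub
    rw [card_erase_of_mem (by simpa using hv)] at this
    have := hc.card_filter_degree_eq_one_le_two hdeg
    omega
  have hcard : #{w | w ≠ v ∧ H.degree w = 1} = 1 := by obtain ⟨k, hk⟩ := hparity; omega
  obtain ⟨w, hw⟩ := card_eq_one.1 hcard
  simp only [eq_singleton_iff_unique_mem, mem_filter, mem_univ, true_and] at hw
  exact ⟨w, hw⟩

theorem existsUnique_reachable_degree_eq_one (hdeg : ∀ u, H.degree u ≤ 2) {v : W}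
    (hv : H.degree v = 1) : ∃! w, H.degree w = 1 ∧ w ≠ v ∧ H.Reachable v w := by
  set c := H.connectedComponentMk v
  have hdeg_c : ∀ u : c, c.toSimpleGraph.degree u = H.degree u := fun u => by
    convert degree_induce_of_neighborSet_subset fun _ hw => c.mem_supp_of_adj_mem_supp u.2 hw
      <;> rfl
  obtain ⟨w, ⟨hwv, hw⟩, huniq⟩ := c.connected_toSimpleGraph.existsUnique_ne_degree_eq_one
    (fun u => hdeg_c u ▸ hdeg u) (v := ⟨v, rfl⟩) (by rw [hdeg_c]; exact hv)
  refine ⟨w, ⟨by rwa [hdeg_c] at hw, fun h => hwv (Subtype.ext h),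
    (ConnectedComponent.eq.1 w.2).symm⟩, ?_⟩
  rintro y ⟨hy, hyv, hvy⟩
  have hyc : y ∈ c.supp := ConnectedComponent.eq.2 hvy.symm
  exact congrArg Subtype.val
    (huniq ⟨y, hyc⟩ ⟨fun h => hyv (congrArg Subtype.val h), by rw [hdeg_c]; exact hy⟩)

end SimpleGraph

section DimerCovers

variable {V : Type*} [Fintype V] [DecidableEq V] {G : SimpleGraph V} {M M₁ M₂ : Finset V}
  {ω ω₁ ω₂ : Finset (Sym2 V)}

open SimpleGraph

theorem IsDimerCover.degree_fromEdgeSet (h : IsDimerCover G M ω) (u : V) :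
    (fromEdgeSet (ω : Set (Sym2 V))).degree u = if u ∈ M then 0 else 1 := by
  rw [← card_neighborFinset_eq_degree]
  split_ifs with hu
  · refine card_eq_zero.2 (eq_empty_of_forall_notMem fun w hw => ?_)
    rw [mem_neighborFinset, fromEdgeSet_adj] at hw
    exact h.2.1 u hu _ hw.1 (Sym2.mem_mk_left u w)
  · obtain ⟨e, ⟨he, hue⟩, huniq⟩ := h.2.2 u hu
    obtain ⟨w, rfl⟩ := Sym2.mem_iff_exists.1 hue
    refine card_eq_one.2 ⟨w, ext fun y => ?_⟩
    rw [mem_neighborFinset, fromEdgeSet_adj, mem_singleton]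
    constructor
    · rintro ⟨hy, -⟩
      exact Sym2.congr_right.1 (huniq _ ⟨hy, Sym2.mem_mk_left u y⟩)
    · rintro rfl
      exact ⟨he, (h.1 _ he).ne⟩

theorem neighborFinset_symmGraph (u : V) :
    (symmGraph ω₁ ω₂).neighborFinset u =
      (fromEdgeSet (ω₁ : Set (Sym2 V))).neighborFinset u ∆
        (fromEdgeSet (ω₂ : Set (Sym2 V))).neighborFinset u := by
  ext w
  simp only [mem_neighborFinset, mem_symmDiff]
  simp only [symmGraph, fromEdgeSet_adj, coe_symmDiff, Set.mem_symmDiff, mem_coe]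
  tauto

/-- Edges shared by `ω₁` and `ω₂` cancel in the overlay, two at a time. -/
theorem IsDimerCover.exists_degree_symmGraph_add_two_mul (h₁ : IsDimerCover G M₁ ω₁)
    (h₂ : IsDimerCover G M₂ ω₂) (u : V) :
    ∃ i, (symmGraph ω₁ ω₂).degree u + 2 * i =
      (if u ∈ M₁ then 0 else 1) + (if u ∈ M₂ then 0 else 1) := by
  refine ⟨#((fromEdgeSet (ω₁ : Set (Sym2 V))).neighborFinset u ∩
    (fromEdgeSet (ω₂ : Set (Sym2 V))).neighborFinset u), ?_⟩
  rw [← card_neighborFinset_eq_degree, neighborFinset_symmGraph,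
    card_symmDiff_add_two_mul_card_inter, card_neighborFinset_eq_degree,
    card_neighborFinset_eq_degree, h₁.degree_fromEdgeSet, h₂.degree_fromEdgeSet]

theorem IsDimerCover.degree_symmGraph_le_two (h₁ : IsDimerCover G M₁ ω₁)
    (h₂ : IsDimerCover G M₂ ω₂) (u : V) : (symmGraph ω₁ ω₂).degree u ≤ 2 := by
  obtain ⟨i, hi⟩ := h₁.exists_degree_symmGraph_add_two_mul h₂ u
  split_ifs at hi <;> omega

theorem IsDimerCover.degree_symmGraph_eq_one_iff (h₁ : IsDimerCover G M₁ ω₁)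
    (h₂ : IsDimerCover G M₂ ω₂) (u : V) : (symmGraph ω₁ ω₂).degree u = 1 ↔ u ∈ M₁ ∆ M₂ := by
  obtain ⟨i, hi⟩ := h₁.exists_degree_symmGraph_add_two_mul h₂ u
  rw [mem_symmDiff]
  split_ifs at hi <;> simp only [*, not_true, not_false_iff, and_true, and_false,
    or_false, false_or, iff_true, iff_false] <;> omega

theorem IsDimerCover.existsUnique_reachable_symmDiff (h₁ : IsDimerCover G M₁ ω₁)
    (h₂ : IsDimerCover G M₂ ω₂) {v : V} (hv : v ∈ M₁ ∆ M₂) :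
    ∃! y, y ∈ M₁ ∆ M₂ ∧ y ≠ v ∧ (symmGraph ω₁ ω₂).Reachable v y := by
  simpa only [h₁.degree_symmGraph_eq_one_iff h₂] using
    existsUnique_reachable_degree_eq_one (h₁.degree_symmGraph_le_two h₂)
      ((h₁.degree_symmGraph_eq_one_iff h₂ v).2 hv)

variable (G) (K : Sym2 V → ℂ)

theorem Zdimer_mul_Zdimer (M₁ M₂ : Finset V) :
    Zdimer G K M₁ * Zdimer G K M₂ =
      ∑ p ∈ univ.filter (IsDimerCover G M₁) ×ˢ univ.filter (IsDimerCover G M₂),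
        (∏ b ∈ p.1, K b) * ∏ b ∈ p.2, K b := by
  rw [Zdimer, Zdimer, sum_mul_sum, sum_product]

theorem Zdouble_singleton (M₁ M₂ : Finset V) (u v : V) :
    Zdouble G K M₁ M₂ [(u, v)] =
      ∑ p ∈ univ.filter (IsDimerCover G M₁) ×ˢ univ.filter (IsDimerCover G M₂),
        if (symmGraph p.1 p.2).Reachable u v then (∏ b ∈ p.1, K b) * ∏ b ∈ p.2, K b else 0 := by
  rw [Zdouble, ← sum_filter]
  congr 1
  ext p
  simp only [mem_filter, mem_product, mem_univ, true_and, List.mem_singleton, forall_eq,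
    and_assoc]

end DimerCovers

/-- In the overlay of a perfect matching `ω₁` with a matching `ω₂` depleted by the
monomer set `M = {x 1, …, x (2n)}`, every monomer is connected to exactly one
other monomer; consequently the connection amplitudes to `x 1` sum to
`Z_{G,K} · Z_{G,K}(M)`. -/
theorem double_dimer_connection_decomposition {V : Type*} [Fintype V] [DecidableEq V]
    (G : SimpleGraph V) (K : Sym2 V → ℂ) (n : ℕ) (hn : 1 ≤ n) (x : ℕ → V)
    (hinj : ∀ i ∈ Finset.Icc 1 (2 * n), ∀ j ∈ Finset.Icc 1 (2 * n), x i = x j → i = j) :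
    (∀ ω₁ ω₂ : Finset (Sym2 V),
      IsDimerCover G ∅ ω₁ → IsDimerCover G ((Finset.Icc 1 (2 * n)).image x) ω₂ →
      ∀ v ∈ (Finset.Icc 1 (2 * n)).image x,
        ∃! y, y ∈ (Finset.Icc 1 (2 * n)).image x ∧ y ≠ v ∧
          (symmGraph ω₁ ω₂).Reachable v y) ∧
    (∑ k ∈ Finset.Icc 2 (2 * n),
        Zdouble G K ∅ ((Finset.Icc 1 (2 * n)).image x) [(x 1, x k)] =
      Zdimer G K ∅ * Zdimer G K ((Finset.Icc 1 (2 * n)).image x)) := by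
  set M := (Icc 1 (2 * n)).image x
  have hpartner : ∀ ω₁ ω₂ : Finset (Sym2 V), IsDimerCover G ∅ ω₁ → IsDimerCover G M ω₂ →
      ∀ v ∈ M, ∃! y, y ∈ M ∧ y ≠ v ∧ (symmGraph ω₁ ω₂).Reachable v y := by
    intro ω₁ ω₂ h₁ h₂ v hv
    simpa only [← bot_eq_empty, bot_symmDiff] using
      h₁.existsUnique_reachable_symmDiff h₂ (by rwa [← bot_eq_empty, bot_symmDiff])
  refine ⟨hpartner, ?_⟩
  have h1 : 1 ∈ Icc 1 (2 * n) := mem_Icc.2 ⟨le_rfl, by omega⟩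
  have hIcc : Icc 2 (2 * n) = (Icc 1 (2 * n)).erase 1 := by
    rw [Icc_erase_left, ← Icc_add_one_left_eq_Ioc]; rfl
  simp_rw [Zdimer_mul_Zdimer, Zdouble_singleton]
  rw [sum_comm, hIcc]
  refine sum_congr rfl fun p hp => ?_
  simp only [mem_product, mem_filter, mem_univ, true_and] at hp
  exact sum_ite_of_existsUnique (existsUnique_mem_erase_of_existsUnique_image hinj h1
    (hpartner _ _ hp.1 hp.2 _ (mem_image_of_mem x h1))) _
end

section
/- (Path representation of the two-point function.) Let G = (V,E) be a finite simple graph with edge weights K : E → ℂ and Z_{G,K} ≠ 0, and let x_1, x_2 ∈ V be distinct. Then S_2(x_1, x_2) = Σ_γ χ_K(γ) · (Z_{G,K}(V(γ)) / Z_{G,K})^2, where the sum runs over all simple paths γ in G from x_1 to x_2 having an odd number of edges, χ_K(γ) := ∏_{b∈γ} K_b, and V(γ) is the set of vertices visited by γ. -/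
open scoped Classical symmDiff
open Finset

/-!
Superpose a dimer cover `ω₁` of `G` with monomers at `x₁, x₂` and a dimer cover `ω₂` of `G`.
Starting at `x₁` and following alternately the `ω₂`-edge and the `ω₁`-edge at the current vertex
traces a simple path `γ` which can only stop at the other monomer `x₂`, so it has odd length; its
odd-numbered edges lie in `ω₂`, its even-numbered ones in `ω₁`, and removing them leaves two dimer
covers of `G` with monomers on `V(γ)`. Conversely, the two alternating edge sets of an odd path `γ`
complete any two dimer covers with monomers on `V(γ)` to such a pair, from which `γ` is recovered.
This bijection gives `Z({x₁, x₂}) · Z = Σ_γ χ(γ) Z(V(γ))²`, and it remains to divide by `Z²`.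
-/

theorem Finset.existsUnique_mem_union_of_forall_not {α : Type*} [DecidableEq α] {s t : Finset α}
    {p : α → Prop} (hs : ∃! a, a ∈ s ∧ p a) (ht : ∀ a ∈ t, ¬ p a) :
    ∃! a, a ∈ s ∪ t ∧ p a := by
  obtain ⟨a, ⟨has, hpa⟩, huniq⟩ := hs
  refine ⟨a, ⟨mem_union_left _ has, hpa⟩, fun b ⟨hb, hpb⟩ => ?_⟩
  rcases mem_union.1 hb with hb | hb
  exacts [huniq b ⟨hb, hpb⟩, absurd hpb (ht b hb)]

namespace IsDimerCover

variable {V : Type*} {G : SimpleGraph V} {M N : Finset V}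
  {ω σ τ : Finset (Sym2 V)}

theorem eq_of_mem_of_mem (hω : IsDimerCover G M ω) {e f : Sym2 V} {w : V} (he : e ∈ ω)
    (hf : f ∈ ω) (hwe : w ∈ e) (hwf : w ∈ f) : e = f := by
  by_cases hwM : w ∈ M
  · exact absurd hwe (hω.2.1 w hwM e he)
  · obtain ⟨g, -, hg⟩ := hω.2.2 w hwM
    rw [hg e ⟨he, hwe⟩, hg f ⟨hf, hwf⟩]

theorem univ_empty [Fintype V] : IsDimerCover G univ (∅ : Finset (Sym2 V)) :=
  ⟨by simp, by simp, fun v hv => absurd (mem_univ v) hv⟩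

variable [DecidableEq V]

theorem insert_edge (hω : IsDimerCover G M ω) {a b : V} (hab : G.Adj a b) (ha : a ∈ M)
    (hb : b ∈ M) : IsDimerCover G ((M.erase a).erase b) (insert s(a, b) ω) := by
  obtain ⟨hG, hM, hcov⟩ := hω
  refine ⟨?_, ?_, fun v hv => ?_⟩
  · simpa [forall_mem_insert] using ⟨hab, hG⟩
  · intro v hv e he
    simp only [mem_erase] at hv
    rcases mem_insert.1 he with rfl | he
    · simp [hv.1, hv.2.1]
    · exact hM v hv.2.2 e he
  · by_cases hvM : v ∈ M
    · have hvab : v = a ∨ v = b := by simp only [mem_erase] at hv; tauto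
      refine ⟨s(a, b), ⟨mem_insert_self _ _, by simpa using hvab⟩, ?_⟩
      rintro e ⟨he, hve⟩
      exact (mem_insert.1 he).resolve_right fun he => hM v hvM e he hve
    · obtain ⟨e, ⟨he, hve⟩, huniq⟩ := hcov v hvM
      refine ⟨e, ⟨mem_insert_of_mem he, hve⟩, ?_⟩
      rintro f ⟨hf, hvf⟩
      rcases mem_insert.1 hf with rfl | hf
      · rcases Sym2.mem_iff.1 hvf with rfl | rfl <;> contradiction
      · exact huniq f ⟨hf, hvf⟩

theorem erase_edge (hω : IsDimerCover G M ω) {a b : V} (hab : s(a, b) ∈ ω) :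
    IsDimerCover G (insert a (insert b M)) (ω.erase s(a, b)) := by
  refine ⟨fun e he => hω.1 e (mem_of_mem_erase he), fun v hv e he hve => ?_,
    fun v hv => ?_⟩
  · obtain ⟨hne, heω⟩ := mem_erase.1 he
    rcases mem_insert.1 hv with rfl | hv
    · exact hne (hω.eq_of_mem_of_mem heω hab hve (Sym2.mem_mk_left _ _))
    rcases mem_insert.1 hv with rfl | hv
    · exact hne (hω.eq_of_mem_of_mem heω hab hve (Sym2.mem_mk_right _ _))
    · exact hω.2.1 v hv e heω hve
  · simp only [mem_insert, not_or] at hv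
    obtain ⟨e, ⟨he, hve⟩, huniq⟩ := hω.2.2 v hv.2.2
    have hne : e ≠ s(a, b) := by rintro rfl; simp_all
    exact ⟨e, ⟨mem_erase.2 ⟨hne, he⟩, hve⟩,
      fun f ⟨hf, hvf⟩ => huniq f ⟨mem_of_mem_erase hf, hvf⟩⟩

section Fintype

variable [Fintype V]

/-! `IsDimerCover G (univ \ T) τ` says that `τ` is a perfect matching of `T`. -/

theorem mem_of_mem_compl {T : Finset V} (hτ : IsDimerCover G (univ \ T) τ) {e : Sym2 V}
    (he : e ∈ τ) {v : V} (hve : v ∈ e) : v ∈ T := by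
  by_contra hvT
  exact hτ.2.1 v (by simpa using hvT) e he hve

theorem disjoint {T : Finset V} (hσ : IsDimerCover G M σ) (hτ : IsDimerCover G (univ \ T) τ)
    (hTM : T ⊆ M) : Disjoint σ τ := by
  refine disjoint_left.2 fun e heσ heτ => ?_
  induction e using Sym2.ind with
  | h a b =>
    have ha : a ∈ s(a, b) := Sym2.mem_mk_left a b
    exact hσ.2.1 a (hTM (hτ.mem_of_mem_compl heτ ha)) _ heσ ha

theorem union (hNM : N ⊆ M) (hσ : IsDimerCover G M σ)
    (hτ : IsDimerCover G (univ \ (M \ N)) τ) : IsDimerCover G N (σ ∪ τ) := by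
  refine ⟨fun e he => ?_, fun v hv e he hve => ?_, fun v hv => ?_⟩
  · rcases mem_union.1 he with he | he
    exacts [hσ.1 e he, hτ.1 e he]
  · rcases mem_union.1 he with he | he
    · exact hσ.2.1 v (hNM hv) e he hve
    · exact (mem_sdiff.1 (hτ.mem_of_mem_compl he hve)).2 hv
  · by_cases hvM : v ∈ M
    · rw [union_comm]
      exact existsUnique_mem_union_of_forall_not (hτ.2.2 v (by simp [hvM, hv]))
        fun e he hve => hσ.2.1 v hvM e he hve
    · exact existsUnique_mem_union_of_forall_not (hσ.2.2 v hvM)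
        fun e he hve => hvM (mem_sdiff.1 (hτ.mem_of_mem_compl he hve)).1

theorem sdiff (hNM : N ⊆ M) (hω : IsDimerCover G N ω) (hτω : τ ⊆ ω)
    (hτ : IsDimerCover G (univ \ (M \ N)) τ) : IsDimerCover G M (ω \ τ) := by
  refine ⟨fun e he => hω.1 e (mem_sdiff.1 he).1, fun v hv e he hve => ?_, fun v hv => ?_⟩
  · obtain ⟨heω, heτ⟩ := mem_sdiff.1 he
    by_cases hvN : v ∈ N
    · exact hω.2.1 v hvN e heω hve
    · obtain ⟨f, ⟨hf, hvf⟩, -⟩ := hτ.2.2 v (by simp [hv, hvN])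
      exact heτ (hω.eq_of_mem_of_mem heω (hτω hf) hve hvf ▸ hf)
  · obtain ⟨e, ⟨he, hve⟩, huniq⟩ := hω.2.2 v fun hvN => hv (hNM hvN)
    have heτ : e ∉ τ := fun heτ => hv (mem_sdiff.1 (hτ.mem_of_mem_compl heτ hve)).1
    exact ⟨e, ⟨mem_sdiff.2 ⟨he, heτ⟩, hve⟩,
      fun f ⟨hf, hvf⟩ => huniq f ⟨(mem_sdiff.1 hf).1, hvf⟩⟩

end Fintype

end IsDimerCover

namespace SimpleGraph.Walk

variable {V : Type*} [DecidableEq V] {G : SimpleGraph V}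

/-- `p.alternatingEdges true` consists of the 1st, 3rd, 5th, … edges of `p`, and
`p.alternatingEdges false` of the 2nd, 4th, … edges. -/
def alternatingEdges : Bool → ∀ {u v : V}, G.Walk u v → Finset (Sym2 V)
  | _, _, _, nil => ∅
  | true, _, _, cons (u := u) (v := w) _ p => insert s(u, w) (p.alternatingEdges false)
  | false, _, _, cons _ p => p.alternatingEdges true

@[simp] theorem alternatingEdges_nil (b : Bool) {u : V} :
    (nil : G.Walk u u).alternatingEdges b = ∅ := by
  cases b <;> rfl

@[simp] theorem alternatingEdges_cons_true {u w v : V} (h : G.Adj u w) (p : G.Walk w v) :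
    (cons h p).alternatingEdges true = insert s(u, w) (p.alternatingEdges false) := rfl

@[simp] theorem alternatingEdges_cons_false {u w v : V} (h : G.Adj u w) (p : G.Walk w v) :
    (cons h p).alternatingEdges false = p.alternatingEdges true := rfl

theorem mem_edges_of_mem_alternatingEdges {b : Bool} {u v : V} {p : G.Walk u v} {e : Sym2 V}
    (he : e ∈ p.alternatingEdges b) : e ∈ p.edges := by
  induction p generalizing b with
  | nil => simp at he
  | cons h q ih =>
    cases b
    · exact List.mem_cons_of_mem _ (ih he)
    · rcases mem_insert.1 he with rfl | he
      exacts [List.mem_cons_self, List.mem_cons_of_mem _ (ih he)]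

theorem alternatingEdges_true_union_false {u v : V} (p : G.Walk u v) :
    p.alternatingEdges true ∪ p.alternatingEdges false = p.edges.toFinset := by
  induction p with
  | nil => simp
  | cons h q ih =>
    rw [alternatingEdges_cons_true, alternatingEdges_cons_false, insert_union,
      union_comm, ih, edges_cons, List.toFinset_cons]

theorem IsPath.disjoint_alternatingEdges {u v : V} {p : G.Walk u v} (hp : p.IsPath) :
    Disjoint (p.alternatingEdges true) (p.alternatingEdges false) := by
  induction p with
  | nil => simp
  | cons h q ih =>
    rw [cons_isPath_iff] at hp
    rw [alternatingEdges_cons_true, alternatingEdges_cons_false, disjoint_insert_left]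
    refine ⟨fun he => hp.2 ?_, (ih hp.1).symm⟩
    exact mem_support_of_mem_edges (mem_edges_of_mem_alternatingEdges he) (Sym2.mem_mk_left _ _)

theorem IsPath.eq_of_alternatingEdges_subset {u v : V} {p q : G.Walk u v} (hp : p.IsPath)
    (hq : q.IsPath) {MA MB : Finset V} {A B : Finset (Sym2 V)} (hA : IsDimerCover G MA A)
    (hB : IsDimerCover G MB B) (hpB : p.alternatingEdges true ⊆ B)
    (hpA : p.alternatingEdges false ⊆ A) (hqB : q.alternatingEdges true ⊆ B)
    (hqA : q.alternatingEdges false ⊆ A) : p = q := by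
  induction p generalizing MA MB A B with
  | nil => exact (eq_nil_iff_nil.2 (isPath_iff_nil.1 hq)).symm
  | @cons u y v h p ih =>
    cases q with
    | nil => simpa using isPath_iff_nil.1 hp
    | @cons _ y' _ h' q =>
      rw [cons_isPath_iff] at hp hq
      simp only [alternatingEdges_cons_true, alternatingEdges_cons_false,
        insert_subset_iff] at hpB hpA hqB hqA
      obtain rfl : y = y' := Sym2.congr_right.1 <|
        hB.eq_of_mem_of_mem hpB.1 hqB.1 (Sym2.mem_mk_left u y) (Sym2.mem_mk_left u y')
      rw [ih hp.1 hq.1 hB hA hpA hpB.2 hqA hqB.2]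

section Fintype

variable [Fintype V]

theorem IsPath.isDimerCover_alternatingEdges_true :
    ∀ {u v : V} {p : G.Walk u v}, p.IsPath → Odd p.length →
      IsDimerCover G (univ \ p.support.toFinset) (p.alternatingEdges true)
  | _, _, .nil, _, hodd => by simp at hodd
  | u, v, .cons h .nil, _, _ => by
    rw [alternatingEdges_cons_true, alternatingEdges_nil]
    convert IsDimerCover.univ_empty.insert_edge h (mem_univ u) (mem_univ v) using 1
    ext; simp [and_comm]
  | u, v, .cons (v := y) h (.cons h' q), hp, hodd => by
    simp only [cons_isPath_iff, support_cons, List.mem_cons, not_or] at hp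
    have ih := isDimerCover_alternatingEdges_true hp.1.1 (by simpa [parity_simps] using hodd)
    rw [alternatingEdges_cons_true, alternatingEdges_cons_false]
    convert ih.insert_edge h (by simpa using hp.2.2) (by simpa using hp.1.2) using 1
    ext; simp only [support_cons, List.toFinset_cons]; grind

theorem IsPath.isDimerCover_alternatingEdges_false :
    ∀ {u v : V} {p : G.Walk u v}, p.IsPath → Odd p.length →
      IsDimerCover G (univ \ (p.support.toFinset \ {u, v})) (p.alternatingEdges false)
  | _, _, .nil, _, hodd => by simp at hodd
  | u, v, .cons h .nil, _, _ => by
    rw [alternatingEdges_cons_false, alternatingEdges_nil]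
    convert (IsDimerCover.univ_empty : IsDimerCover G univ ∅) using 2
    ext; simp
  | u, v, .cons (v := y) h (.cons (v := z) h' q), hp, hodd => by
    have hq : Odd q.length := by simpa [parity_simps] using hodd
    simp only [cons_isPath_iff, support_cons, List.mem_cons, not_or] at hp
    have hzv : z ≠ v := by
      rintro rfl
      simp [(isPath_iff_nil.1 hp.1.1).length_eq_zero] at hq
    have ih := isDimerCover_alternatingEdges_false hp.1.1 hq
    rw [alternatingEdges_cons_false, alternatingEdges_cons_true]
    convert ih.insert_edge h' (by simp [hp.1.2]) (by simp) using 1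
    have hz := q.start_mem_support
    have hv := q.end_mem_support
    ext; simp only [support_cons, List.toFinset_cons, mem_sdiff, mem_univ, mem_insert,
      mem_singleton, mem_erase, List.mem_toFinset]
    grind

theorem exists_isPath_alternatingEdges_subset {A B : Finset (Sym2 V)} {N : Finset V} {a b : V}
    (hA : IsDimerCover G (insert a (insert b N)) A) (hB : IsDimerCover G N B)
    (ha : a ∉ N) (hb : b ∉ N) (hab : a ≠ b) :
    ∃ p : G.Walk a b, p.IsPath ∧ Odd p.length ∧ (∀ w ∈ p.support, w ∉ N) ∧
      p.alternatingEdges true ⊆ B ∧ p.alternatingEdges false ⊆ A := by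
  obtain ⟨e, ⟨heB, hae⟩, -⟩ := hB.2.2 a ha
  obtain ⟨y, rfl⟩ := Sym2.mem_iff_exists.1 hae
  have hay : G.Adj a y := hB.1 _ heB
  have hyN : y ∉ N := fun hyN => hB.2.1 y hyN _ heB (Sym2.mem_mk_right a y)
  by_cases hyb : y = b
  · subst hyb
    exact ⟨cons hay nil, by simp [hab], by simp, by simp [ha, hyN], by simpa using heB, by simp⟩
  have hyA : y ∉ insert a (insert b N) := by simp [hay.ne.symm, hyb, hyN]
  obtain ⟨f, ⟨hfA, hyf⟩, -⟩ := hA.2.2 y hyA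
  obtain ⟨z, rfl⟩ := Sym2.mem_iff_exists.1 hyf
  have hyz : G.Adj y z := hA.1 _ hfA
  have hz : z ∉ insert a (insert b N) := fun hz => hA.2.1 z hz _ hfA (Sym2.mem_mk_right y z)
  simp only [mem_insert, not_or] at hz
  have hA' : IsDimerCover G (insert z (insert b (insert a (insert y N)))) (A.erase s(y, z)) := by
    convert hA.erase_edge hfA using 1
    ext; simp only [mem_insert]; tauto
  have hdecr : (univ \ insert a (insert y N)).card < (univ \ N).card := by
    refine card_lt_card ((ssubset_iff_of_subset ?_).2 ⟨a, by simp [ha], by simp⟩)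
    exact sdiff_subset_sdiff le_rfl ((subset_insert _ _).trans (subset_insert _ _))
  obtain ⟨p, hp, hodd, hpN, hpB, hpA⟩ :=
    exists_isPath_alternatingEdges_subset hA' (hB.erase_edge heB) (by simp [hz, hyz.ne.symm])
      (by simp [hb, Ne.symm hab, Ne.symm hyb]) hz.2.1
  simp only [mem_insert, not_or] at hpN
  refine ⟨cons hay (cons hyz p), ?_, by simpa [parity_simps] using hodd, ?_, ?_, ?_⟩
  · simp only [cons_isPath_iff, support_cons, List.mem_cons, not_or]
    exact ⟨⟨hp, fun hy => (hpN y hy).2.1 rfl⟩, hay.ne, fun ha => (hpN a ha).1 rfl⟩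
  · simp only [support_cons, List.mem_cons]
    rintro w (rfl | rfl | hw)
    exacts [ha, hyN, (hpN w hw).2.2]
  · simpa [insert_subset_iff, heB] using hpB.trans (erase_subset _ _)
  · simpa [insert_subset_iff, hfA] using hpA.trans (erase_subset _ _)
termination_by (univ \ N).card

variable {u v : V} {p : G.Walk u v} {σ ω : Finset (Sym2 V)}

theorem IsPath.isDimerCover_union_alternatingEdges_false (hp : p.IsPath) (hodd : Odd p.length)
    (hσ : IsDimerCover G p.support.toFinset σ) :
    IsDimerCover G {u, v} (σ ∪ p.alternatingEdges false) :=
  hσ.union (by simp [insert_subset_iff]) (hp.isDimerCover_alternatingEdges_false hodd)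

theorem IsPath.isDimerCover_union_alternatingEdges_true (hp : p.IsPath) (hodd : Odd p.length)
    (hσ : IsDimerCover G p.support.toFinset σ) :
    IsDimerCover G ∅ (σ ∪ p.alternatingEdges true) :=
  hσ.union (empty_subset _) (by simpa using hp.isDimerCover_alternatingEdges_true hodd)

theorem IsPath.isDimerCover_sdiff_alternatingEdges_false (hp : p.IsPath) (hodd : Odd p.length)
    (hω : IsDimerCover G {u, v} ω) (hpω : p.alternatingEdges false ⊆ ω) :
    IsDimerCover G p.support.toFinset (ω \ p.alternatingEdges false) :=
  hω.sdiff (by simp [insert_subset_iff]) hpω (hp.isDimerCover_alternatingEdges_false hodd)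

theorem IsPath.isDimerCover_sdiff_alternatingEdges_true (hp : p.IsPath) (hodd : Odd p.length)
    (hω : IsDimerCover G ∅ ω) (hpω : p.alternatingEdges true ⊆ ω) :
    IsDimerCover G p.support.toFinset (ω \ p.alternatingEdges true) :=
  hω.sdiff (empty_subset _) hpω (by simpa using hp.isDimerCover_alternatingEdges_true hodd)

theorem IsPath.disjoint_alternatingEdges_false (hp : p.IsPath) (hodd : Odd p.length)
    (hσ : IsDimerCover G p.support.toFinset σ) : Disjoint σ (p.alternatingEdges false) :=
  hσ.disjoint (hp.isDimerCover_alternatingEdges_false hodd) sdiff_subset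

theorem IsPath.disjoint_alternatingEdges_true (hp : p.IsPath) (hodd : Odd p.length)
    (hσ : IsDimerCover G p.support.toFinset σ) : Disjoint σ (p.alternatingEdges true) :=
  hσ.disjoint (hp.isDimerCover_alternatingEdges_true hodd) subset_rfl

theorem IsPath.eq_of_union_alternatingEdges_eq {q : G.Walk u v} {σ₁ σ₂ τ₁ τ₂ : Finset (Sym2 V)}
    (hp : p.IsPath) (hq : q.IsPath) (hodd : Odd p.length)
    (hσ₁ : IsDimerCover G p.support.toFinset σ₁) (hσ₂ : IsDimerCover G p.support.toFinset σ₂)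
    (hτ₁ : IsDimerCover G q.support.toFinset τ₁) (hτ₂ : IsDimerCover G q.support.toFinset τ₂)
    (h₁ : σ₁ ∪ p.alternatingEdges false = τ₁ ∪ q.alternatingEdges false)
    (h₂ : σ₂ ∪ p.alternatingEdges true = τ₂ ∪ q.alternatingEdges true) :
    p = q ∧ σ₁ = τ₁ ∧ σ₂ = τ₂ := by
  obtain rfl : p = q := hp.eq_of_alternatingEdges_subset hq
    (hp.isDimerCover_union_alternatingEdges_false hodd hσ₁)
    (hp.isDimerCover_union_alternatingEdges_true hodd hσ₂)
    subset_union_right subset_union_right (h₂ ▸ subset_union_right) (h₁ ▸ subset_union_right)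
  refine ⟨rfl, ?_, ?_⟩
  · rw [← union_sdiff_cancel_right (hp.disjoint_alternatingEdges_false hodd hσ₁), h₁,
      union_sdiff_cancel_right (hp.disjoint_alternatingEdges_false hodd hτ₁)]
  · rw [← union_sdiff_cancel_right (hp.disjoint_alternatingEdges_true hodd hσ₂), h₂,
      union_sdiff_cancel_right (hp.disjoint_alternatingEdges_true hodd hτ₂)]

end Fintype

end SimpleGraph.Walk

theorem Zdimer_mul_Zdimer_s11 {V : Type*} [Fintype V] [DecidableEq V] (G : SimpleGraph V)
    (K : Sym2 V → ℂ) (M N : Finset V) :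
    Zdimer G K M * Zdimer G K N =
      ∑ ω ∈ univ.filter (IsDimerCover G M) ×ˢ univ.filter (IsDimerCover G N),
        (∏ b ∈ ω.1, K b) * ∏ b ∈ ω.2, K b := by
  rw [Zdimer, Zdimer, sum_mul_sum, sum_product]

-- The sum over paths in `two_point_function_path_representation` ranges over this image of the
-- paths in `G.Walk x₁ x₂`.
theorem SimpleGraph.Path.mem_coe_univ {V : Type*} [Fintype V] [DecidableEq V] {G : SimpleGraph V}
    [DecidableRel G.Adj] {u v : V} {p : G.Walk u v} :
    p ∈ ((univ : Finset (G.Path u v)) : Finset (G.Walk u v)) ↔ p.IsPath := by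
  simp

open SimpleGraph in
theorem Zdimer_pair_mul_Zdimer_empty {V : Type*} [Fintype V] [DecidableEq V] (G : SimpleGraph V)
    [DecidableRel G.Adj] (K : Sym2 V → ℂ) {x₁ x₂ : V} (hx : x₁ ≠ x₂) :
    Zdimer G K {x₁, x₂} * Zdimer G K ∅ =
      ∑ γ ∈ (univ : Finset (G.Path x₁ x₂)).filter (fun γ => Odd (γ : G.Walk x₁ x₂).length),
        (∏ b ∈ (γ : G.Walk x₁ x₂).edges.toFinset, K b) *
          Zdimer G K (γ : G.Walk x₁ x₂).support.toFinset ^ 2 := by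
  simp_rw [Zdimer_mul_Zdimer_s11, sq, Zdimer_mul_Zdimer_s11, mul_sum]
  rw [sum_sigma']
  symm
  refine sum_bij (fun t _ => (t.2.1 ∪ t.1.alternatingEdges false,
    t.2.2 ∪ t.1.alternatingEdges true)) ?_ ?_ ?_ ?_
  · rintro ⟨γ, σ₁, σ₂⟩ ht
    simp only [mem_sigma, mem_filter, mem_product, mem_univ, true_and, Path.mem_coe_univ] at ht ⊢
    obtain ⟨⟨hγ, hodd⟩, hσ₁, hσ₂⟩ := ht
    exact ⟨hγ.isDimerCover_union_alternatingEdges_false hodd hσ₁,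
      hγ.isDimerCover_union_alternatingEdges_true hodd hσ₂⟩
  · rintro ⟨γ, σ₁, σ₂⟩ ht ⟨γ', σ₁', σ₂'⟩ ht' heq
    simp only [mem_sigma, mem_filter, mem_product, mem_univ, true_and, Path.mem_coe_univ] at ht ht'
    obtain ⟨heq₁, heq₂⟩ := Prod.mk.inj heq
    obtain ⟨rfl, rfl, rfl⟩ := ht.1.1.eq_of_union_alternatingEdges_eq ht'.1.1 ht.1.2
      ht.2.1 ht.2.2 ht'.2.1 ht'.2.2 heq₁ heq₂
    rfl
  · rintro ⟨ω₁, ω₂⟩ hω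
    simp only [mem_product, mem_filter, mem_univ, true_and] at hω
    obtain ⟨γ, hγ, hodd, -, hγω₂, hγω₁⟩ := Walk.exists_isPath_alternatingEdges_subset
      (N := ∅) (by simpa using hω.1) hω.2 (notMem_empty _) (notMem_empty _) hx
    refine ⟨⟨γ, ω₁ \ γ.alternatingEdges false, ω₂ \ γ.alternatingEdges true⟩, ?_, ?_⟩
    · simp only [mem_sigma, mem_filter, mem_product, mem_univ, true_and, Path.mem_coe_univ]
      exact ⟨⟨hγ, hodd⟩, hγ.isDimerCover_sdiff_alternatingEdges_false hodd hω.1 hγω₁,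
        hγ.isDimerCover_sdiff_alternatingEdges_true hodd hω.2 hγω₂⟩
    · simp only [sdiff_union_of_subset hγω₁, sdiff_union_of_subset hγω₂]
  · rintro ⟨γ, σ₁, σ₂⟩ ht
    simp only [mem_sigma, mem_filter, mem_product, mem_univ, true_and, Path.mem_coe_univ] at ht
    obtain ⟨⟨hγ, hodd⟩, hσ₁, hσ₂⟩ := ht
    rw [prod_union (hγ.disjoint_alternatingEdges_false hodd hσ₁),
      prod_union (hγ.disjoint_alternatingEdges_true hodd hσ₂),
      ← γ.alternatingEdges_true_union_false, prod_union hγ.disjoint_alternatingEdges]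
    ring

theorem two_point_function_path_representation_general {V : Type*} [Fintype V] [DecidableEq V]
    (G : SimpleGraph V) [DecidableRel G.Adj] (K : Sym2 V → ℂ)
    (x₁ x₂ : V) (hx : x₁ ≠ x₂) :
    Zdimer G K {x₁, x₂} / Zdimer G K ∅ =
      ∑ γ ∈ (Finset.univ : Finset (G.Path x₁ x₂)).filter
          (fun γ => Odd (γ : G.Walk x₁ x₂).length),
        (∏ b ∈ (γ : G.Walk x₁ x₂).edges.toFinset, K b) *
          (Zdimer G K (γ : G.Walk x₁ x₂).support.toFinset / Zdimer G K ∅) ^ 2 := by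
  simp_rw [div_pow, ← mul_div_assoc, ← sum_div, ← Zdimer_pair_mul_Zdimer_empty G K hx, sq,
    mul_div_assoc, div_self_mul_self', div_eq_mul_inv]

/-- Path representation of the monomer two-point function:
`S₂(x₁,x₂) = Σ_γ χ_K(γ) (Z_{G,K}(V(γ))/Z_{G,K})²`, the sum running over all
simple paths `γ` from `x₁` to `x₂` in `G` with an odd number of edges. -/
theorem two_point_function_path_representation {V : Type*} [Fintype V] [DecidableEq V]
    (G : SimpleGraph V) [DecidableRel G.Adj] (K : Sym2 V → ℂ)
    (hZ : Zdimer G K ∅ ≠ 0) (x₁ x₂ : V) (hx : x₁ ≠ x₂) :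
    Zdimer G K {x₁, x₂} / Zdimer G K ∅ =
      ∑ γ ∈ (Finset.univ : Finset (G.Path x₁ x₂)).filter
          (fun γ => Odd (γ : G.Walk x₁ x₂).length),
        (∏ b ∈ (γ : G.Walk x₁ x₂).edges.toFinset, K b) *
          (Zdimer G K (γ : G.Walk x₁ x₂).support.toFinset / Zdimer G K ∅) ^ 2 :=
  two_point_function_path_representation_general G K x₁ x₂ hx
end
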